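/- arXiv:math/0202072 — 8 statements merged into one kernel-verified Lean document; each statement's English description precedes it below -/
import Mathlib

section
/- For all integers k ≥ 0 and ℓ, m with |ℓ| + |m| ≤ k and ℓ + m ≡ k (mod 2), the function F_{kℓm} : ℝ⁴ → ℝ is the evaluation of a homogeneous polynomial of degree k in the four coordinates, and it is harmonic on ℝ⁴, i.e. ∂²F_{kℓm}/∂x² + ∂²F_{kℓm}/∂y² + ∂²F_{kℓm}/∂z² + ∂²F_{kℓm}/∂w² = 0 identically. -/
noncomputable section


/-- `circ j u v` is `A_j(u,v)`: the real part of `(u + iv)^|j|` if `j ≥ 0`,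
and the imaginary part if `j < 0`. -/
def circ (j : ℤ) (u v : ℝ) : ℝ :=
  if 0 ≤ j then (((u : ℂ) + v * Complex.I) ^ j.natAbs).re
  else (((u : ℂ) + v * Complex.I) ^ j.natAbs).im

/-- `dd k ℓ m = (k - |ℓ| - |m|) / 2`. -/
def dd (k : ℕ) (ℓ m : ℤ) : ℕ := (k - ℓ.natAbs - m.natAbs) / 2

/-- The function `F_{kℓm} : ℝ⁴ → ℝ`. -/
def F (k : ℕ) (ℓ m : ℤ) (p : Fin 4 → ℝ) : ℝ :=
  (∑ i ∈ Finset.range (dd k ℓ m + 1),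
      (Nat.choose (m.natAbs + dd k ℓ m) i : ℝ) *
      (Nat.choose (ℓ.natAbs + dd k ℓ m) (dd k ℓ m - i) : ℝ) *
      (p 0 ^ 2 + p 1 ^ 2) ^ i * (-(p 2 ^ 2 + p 3 ^ 2)) ^ (dd k ℓ m - i))
    * circ ℓ (p 0) (p 1) * circ m (p 2) (p 3)

/-- `f` is the evaluation of a homogeneous polynomial of degree `k`. -/
def IsHomogeneousPolyEval (k : ℕ) (f : (Fin 4 → ℝ) → ℝ) : Prop :=
  ∃ P : MvPolynomial (Fin 4) ℝ, P.IsHomogeneous k ∧ ∀ v, MvPolynomial.eval v P = f v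

/-- `f` is harmonic: the sum of its four second coordinate partial derivatives vanishes. -/
def IsHarmonic (f : (Fin 4 → ℝ) → ℝ) : Prop :=
  ∀ v : Fin 4 → ℝ,
    ∑ i : Fin 4, fderiv ℝ (fun w => fderiv ℝ f w (Pi.single i 1)) v (Pi.single i 1) = 0

/-- The Jacobi polynomial `P_d^{(a,b)}`. -/
def jacobiP (d a b : ℕ) (u : ℝ) : ℝ :=
  (1 / 2 ^ d) * ∑ i ∈ Finset.range (d + 1),
    (Nat.choose (a + d) i : ℝ) * (Nat.choose (b + d) (d - i) : ℝ) *
      (u + 1) ^ i * (u - 1) ^ (d - i)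

/-- The radial function `X_{kℓm}`. -/
def Xrad (k : ℕ) (ℓ m : ℤ) (χ : ℝ) : ℝ :=
  Real.cos χ ^ ℓ.natAbs * Real.sin χ ^ m.natAbs *
    jacobiP (dd k ℓ m) m.natAbs ℓ.natAbs (Real.cos (2 * χ))

/-- The circular harmonic: `cos(|j|·θ)` if `j ≥ 0`, else `sin(|j|·θ)`. -/
def circHarm (j : ℤ) (θ : ℝ) : ℝ :=
  if 0 ≤ j then Real.cos (j.natAbs * θ) else Real.sin (j.natAbs * θ)

/-- The eigenmode `Ψ̃_{kℓm}` in toroidal coordinates. -/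
def PsiT (k : ℕ) (ℓ m : ℤ) (χ θ φ : ℝ) : ℝ :=
  Xrad k ℓ m χ * circHarm ℓ θ * circHarm m φ

/-- The rotation `R(Δθ, Δφ)` of `ℝ⁴`. -/
def Rrot (a b : ℝ) (p : Fin 4 → ℝ) : Fin 4 → ℝ :=
  ![p 0 * Real.cos a - p 1 * Real.sin a,
    p 0 * Real.sin a + p 1 * Real.cos a,
    p 2 * Real.cos b - p 3 * Real.sin b,
    p 2 * Real.sin b + p 3 * Real.cos b]

/-- The isometry `A(x,y,z,w) = (z, -w, -x, y)`. -/
def Amap (p : Fin 4 → ℝ) : Fin 4 → ℝ :=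
  ![p 2, -(p 3), -(p 0), p 1]

/-- The sign `σ_{kℓm}`. -/
def sgn (k : ℕ) (ℓ m : ℤ) : ℝ :=
  (if Even (dd k ℓ m) then 1 else -1) * (if 0 ≤ ℓ then 1 else -1) *
  (if 0 ≤ m then 1 else -1) * (if Even m then 1 else -1)

open MvPolynomial

abbrev P4 := MvPolynomial (Fin 4) ℝ

/-- pair of polynomials: real and imaginary parts of (X a + i X b)^n -/
def csP (a b : Fin 4) : ℕ → P4 × P4
  | 0 => (1, 0)
  | n+1 => (X a * (csP a b n).1 - X b * (csP a b n).2,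
            X a * (csP a b n).2 + X b * (csP a b n).1)

lemma eval_csP (a b : Fin 4) (n : ℕ) (v : Fin 4 → ℝ) :
    eval v (csP a b n).1 = (((v a : ℂ) + v b * Complex.I) ^ n).re ∧
    eval v (csP a b n).2 = (((v a : ℂ) + v b * Complex.I) ^ n).im := by
  induction n with
  | zero => simp [csP]
  | succ n ih =>
    simp only [csP, pow_succ, Complex.mul_re, Complex.mul_im, Complex.add_re, Complex.add_im,
      Complex.ofReal_re, Complex.ofReal_im, Complex.mul_I_re, Complex.mul_I_im, Complex.I_re, Complex.I_im,
      map_add, map_sub, map_mul, eval_X, ih.1, ih.2]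
    constructor <;> ring

lemma homog_csP (a b : Fin 4) (n : ℕ) :
    ((csP a b n).1).IsHomogeneous n ∧ ((csP a b n).2).IsHomogeneous n := by
  induction n with
  | zero => exact ⟨isHomogeneous_one _ _, isHomogeneous_zero _ _ _⟩
  | succ n ih =>
    have h1 := ((isHomogeneous_X ℝ a).mul ih.1).sub ((isHomogeneous_X ℝ b).mul ih.2)
    have h2 := ((isHomogeneous_X ℝ a).mul ih.2).add ((isHomogeneous_X ℝ b).mul ih.1)
    rw [add_comm 1 n] at h1 h2
    exact ⟨h1, h2⟩

lemma csP_succ_1 (a b : Fin 4) (n : ℕ) :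
    (csP a b (n+1)).1 = X a * (csP a b n).1 - X b * (csP a b n).2 := rfl

lemma csP_succ_2 (a b : Fin 4) (n : ℕ) :
    (csP a b (n+1)).2 = X a * (csP a b n).2 + X b * (csP a b n).1 := rfl

lemma pderiv_csP (a b : Fin 4) (hab : a ≠ b) (n : ℕ) :
    pderiv a (csP a b (n+1)).1 = C ((n:ℝ)+1) * (csP a b n).1 ∧
    pderiv b (csP a b (n+1)).1 = -(C ((n:ℝ)+1) * (csP a b n).2) ∧
    pderiv a (csP a b (n+1)).2 = C ((n:ℝ)+1) * (csP a b n).2 ∧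
    pderiv b (csP a b (n+1)).2 = C ((n:ℝ)+1) * (csP a b n).1 := by
  induction n with
  | zero =>
    refine ⟨?_, ?_, ?_, ?_⟩ <;>
      simp [csP, pderiv_mul, pderiv_X_self, pderiv_X_of_ne hab, pderiv_X_of_ne hab.symm]
  | succ n ih =>
    obtain ⟨h1, h2, h3, h4⟩ := ih
    refine ⟨?_, ?_, ?_, ?_⟩ <;>
    · first
      | rw [csP_succ_1 a b (n+1)]
      | rw [csP_succ_2 a b (n+1)]
      simp only [map_sub, map_add, pderiv_mul, pderiv_X_self,
        pderiv_X_of_ne hab, pderiv_X_of_ne hab.symm, h1, h2, h3, h4]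
      simp only [csP_succ_1 a b n, csP_succ_2 a b n]
      push_cast
      simp only [map_add, map_one]
      ring

lemma pderiv_csP_other (a b i : Fin 4) (hia : a ≠ i) (hib : b ≠ i) (n : ℕ) :
    pderiv i (csP a b n).1 = 0 ∧ pderiv i (csP a b n).2 = 0 := by
  induction n with
  | zero => simp [csP]
  | succ n ih =>
    rw [csP_succ_1, csP_succ_2]
    simp [pderiv_mul, pderiv_X_of_ne hia, pderiv_X_of_ne hib, ih.1, ih.2]

lemma euler_csP (a b : Fin 4) (hab : a ≠ b) (n : ℕ) :
    X a * pderiv a (csP a b n).1 + X b * pderiv b (csP a b n).1 = C (n:ℝ) * (csP a b n).1 ∧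
    X a * pderiv a (csP a b n).2 + X b * pderiv b (csP a b n).2 = C (n:ℝ) * (csP a b n).2 := by
  cases n with
  | zero => simp [csP]
  | succ n =>
    obtain ⟨h1, h2, h3, h4⟩ := pderiv_csP a b hab n
    rw [h1, h2, h3, h4, csP_succ_1, csP_succ_2]
    push_cast
    constructor <;> · simp only [map_add, map_one]; ring

lemma harm_csP (a b : Fin 4) (hab : a ≠ b) (n : ℕ) :
    pderiv a (pderiv a (csP a b n).1) + pderiv b (pderiv b (csP a b n).1) = 0 ∧
    pderiv a (pderiv a (csP a b n).2) + pderiv b (pderiv b (csP a b n).2) = 0 := by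
  cases n with
  | zero => simp [csP]
  | succ n =>
    obtain ⟨h1, h2, h3, h4⟩ := pderiv_csP a b hab n
    rw [h1, h2, h3, h4]
    cases n with
    | zero => simp [csP]
    | succ n =>
      obtain ⟨g1, g2, g3, g4⟩ := pderiv_csP a b hab n
      simp only [pderiv_C_mul, map_neg, g1, g2, g3, g4]
      constructor <;> ring

/-- Euler operator in two variables. -/
def Eop (a b : Fin 4) (Q : P4) : P4 := X a * pderiv a Q + X b * pderiv b Q

/-- Laplacian in two variables. -/
def Dop (a b : Fin 4) (Q : P4) : P4 := pderiv a (pderiv a Q) + pderiv b (pderiv b Q)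

/-- `ε·(X_a² + X_b²)`. -/
def GP (ε : ℝ) (a b : Fin 4) : P4 := C ε * (X a * X a + X b * X b)

lemma Eop_mul (a b : Fin 4) (Q R : P4) :
    Eop a b (Q * R) = Eop a b Q * R + Q * Eop a b R := by
  simp only [Eop, pderiv_mul]; ring

lemma Eop_G (ε : ℝ) (a b : Fin 4) (hab : a ≠ b) :
    Eop a b (GP ε a b) = 2 * GP ε a b := by
  simp only [Eop, GP, pderiv_C_mul, map_add, pderiv_mul, pderiv_X_self,
    pderiv_X_of_ne hab, pderiv_X_of_ne hab.symm, pderiv_C, pderiv_one, map_zero]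
  ring

lemma Dop_G_mul (ε : ℝ) (a b : Fin 4) (hab : a ≠ b) (Q : P4) :
    Dop a b (GP ε a b * Q) =
      C (4*ε) * Q + C (4*ε) * Eop a b Q + GP ε a b * Dop a b Q := by
  simp only [Dop, Eop, GP, pderiv_C_mul, map_add, pderiv_mul, pderiv_X_self,
    pderiv_X_of_ne hab, pderiv_X_of_ne hab.symm, pderiv_C, pderiv_one, map_zero]
  simp only [show (C (4*ε) : P4) = 4 * C ε by rw [map_mul, map_ofNat]]
  ring

lemma C_push (x y : ℝ) : (C (x*y) : P4) = C x * C y := map_mul C x y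

lemma euler_pow (ε : ℝ) (a b : Fin 4) (hab : a ≠ b) (n : ℕ) (A : P4)
    (hA : Eop a b A = C (n:ℝ) * A) (i : ℕ) :
    Eop a b (GP ε a b ^ i * A) = C (2*(i:ℝ)+(n:ℝ)) * (GP ε a b ^ i * A) := by
  induction i with
  | zero => simpa using hA
  | succ i ih =>
    have : GP ε a b ^ (i+1) * A = GP ε a b * (GP ε a b ^ i * A) := by ring
    rw [this, Eop_mul, Eop_G ε a b hab, ih]
    push_cast
    simp only [map_add, map_mul, map_one, map_ofNat]
    ring

lemma lap_pow (ε : ℝ) (a b : Fin 4) (hab : a ≠ b) (n : ℕ) (A : P4)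
    (hA : Eop a b A = C (n:ℝ) * A) (hH : Dop a b A = 0) (i : ℕ) :
    Dop a b (GP ε a b ^ (i+1) * A)
      = C (4*ε*((i:ℝ)+1)*((i:ℝ)+1+(n:ℝ))) * (GP ε a b ^ i * A) := by
  induction i with
  | zero =>
    have : GP ε a b ^ 1 * A = GP ε a b * A := by ring
    rw [this, Dop_G_mul ε a b hab, hA, hH]
    simp only [Nat.cast_zero, map_add, map_mul, map_one, map_ofNat, map_zero]
    ring
  | succ i ih =>
    have : GP ε a b ^ (i+2) * A = GP ε a b * (GP ε a b ^ (i+1) * A) := by ring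
    rw [this, Dop_G_mul ε a b hab, ih, euler_pow ε a b hab n A hA (i+1)]
    push_cast
    simp only [map_add, map_mul, map_one, map_ofNat]
    ring

lemma Dop_mul_right (a b : Fin 4) (Q K : P4) (h1 : pderiv a K = 0) (h2 : pderiv b K = 0) :
    Dop a b (Q * K) = Dop a b Q * K := by
  simp only [Dop, pderiv_mul, h1, h2, mul_zero, add_zero, map_add]
  ring

lemma Dop_C_mul (a b : Fin 4) (c : ℝ) (Q : P4) :
    Dop a b (C c * Q) = C c * Dop a b Q := by
  simp only [Dop, pderiv_C_mul, mul_add]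

lemma Dop_sum (a b : Fin 4) (s : Finset ℕ) (f : ℕ → P4) :
    Dop a b (∑ i ∈ s, f i) = ∑ i ∈ s, Dop a b (f i) := by
  simp only [Dop, map_sum, Finset.sum_add_distrib]

lemma binom_id (n p d i : ℕ) (hi : i < d) :
    (((p+d).choose (i+1) : ℝ) * ((n+d).choose (d-(i+1)) : ℝ)) * (4*1*((i:ℝ)+1)*((i:ℝ)+1+(n:ℝ)))
    + (((p+d).choose i : ℝ) * ((n+d).choose (d-i) : ℝ)) *
        (4*(-1)*((((d-(i+1)) : ℕ):ℝ)+1)*((((d-(i+1)) : ℕ):ℝ)+1+(p:ℝ))) = 0 := by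
  obtain ⟨j, rfl⟩ : ∃ j, d = i + j + 1 := ⟨d - (i+1), by omega⟩
  simp only [show i+j+1-(i+1) = j from by omega, show i+j+1-i = j+1 from by omega]
  have h1 : (p+(i+j+1)).choose (i+1) * (i+1) = (p+(i+j+1)).choose i * (p+j+1) := by
    have := Nat.choose_succ_right_eq (p+(i+j+1)) i
    rwa [show p+(i+j+1)-i = p+j+1 from by omega] at this
  have h2 : (n+(i+j+1)).choose (j+1) * (j+1) = (n+(i+j+1)).choose j * (n+i+1) := by
    have := Nat.choose_succ_right_eq (n+(i+j+1)) j
    rwa [show n+(i+j+1)-j = n+i+1 from by omega] at this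
  have h1' : ((p+(i+j+1)).choose (i+1) : ℝ) * ((i:ℝ)+1)
      = ((p+(i+j+1)).choose i : ℝ) * ((p:ℝ)+(j:ℝ)+1) := by exact_mod_cast h1
  have h2' : ((n+(i+j+1)).choose (j+1) : ℝ) * ((j:ℝ)+1)
      = ((n+(i+j+1)).choose j : ℝ) * ((n:ℝ)+(i:ℝ)+1) := by exact_mod_cast h2
  linear_combination (4*((i:ℝ)+1+(n:ℝ)) * ((n+(i+j+1)).choose j : ℝ)) * h1'
    - (4*((p:ℝ)+(j:ℝ)+1) * ((p+(i+j+1)).choose i : ℝ)) * h2'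

/-- The main polynomial. -/
def Ppoly (n p d : ℕ) (A B : P4) : P4 :=
  ∑ i ∈ Finset.range (d+1),
    C (((p+d).choose i : ℝ) * ((n+d).choose (d-i) : ℝ)) *
      ((GP 1 0 1 ^ i * A) * (GP (-1) 2 3 ^ (d-i) * B))

lemma lap_Ppoly (n p d : ℕ) (A B : P4)
    (hAE : Eop 0 1 A = C (n:ℝ) * A) (hAH : Dop 0 1 A = 0)
    (hA2 : pderiv 2 A = 0) (hA3 : pderiv 3 A = 0)
    (hBE : Eop 2 3 B = C (p:ℝ) * B) (hBH : Dop 2 3 B = 0)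
    (hB0 : pderiv 0 B = 0) (hB1 : pderiv 1 B = 0) :
    Dop 0 1 (Ppoly n p d A B) + Dop 2 3 (Ppoly n p d A B) = 0 := by
  have h01 : (0 : Fin 4) ≠ 1 := by decide
  have h23 : (2 : Fin 4) ≠ 3 := by decide
  have hW0 : ∀ j, pderiv 0 (GP (-1) 2 3 ^ j * B) = 0 := by
    intro j
    simp [pderiv_mul, pderiv_pow, GP, pderiv_C_mul,
      pderiv_X_of_ne (show (2:Fin 4) ≠ 0 by decide),
      pderiv_X_of_ne (show (3:Fin 4) ≠ 0 by decide), hB0]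
  have hW1 : ∀ j, pderiv 1 (GP (-1) 2 3 ^ j * B) = 0 := by
    intro j
    simp [pderiv_mul, pderiv_pow, GP, pderiv_C_mul,
      pderiv_X_of_ne (show (2:Fin 4) ≠ 1 by decide),
      pderiv_X_of_ne (show (3:Fin 4) ≠ 1 by decide), hB1]
  have hU2 : ∀ i, pderiv 2 (GP 1 0 1 ^ i * A) = 0 := by
    intro i
    simp [pderiv_mul, pderiv_pow, GP, pderiv_C_mul,
      pderiv_X_of_ne (show (0:Fin 4) ≠ 2 by decide),
      pderiv_X_of_ne (show (1:Fin 4) ≠ 2 by decide), hA2]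
  have hU3 : ∀ i, pderiv 3 (GP 1 0 1 ^ i * A) = 0 := by
    intro i
    simp [pderiv_mul, pderiv_pow, GP, pderiv_C_mul,
      pderiv_X_of_ne (show (0:Fin 4) ≠ 3 by decide),
      pderiv_X_of_ne (show (1:Fin 4) ≠ 3 by decide), hA3]
  have e1 : Dop 0 1 (Ppoly n p d A B)
      = ∑ i ∈ Finset.range (d+1),
          C (((p+d).choose i : ℝ) * ((n+d).choose (d-i) : ℝ)) *
            (Dop 0 1 (GP 1 0 1 ^ i * A) * (GP (-1) 2 3 ^ (d-i) * B)) := by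
    rw [Ppoly, Dop_sum]
    refine Finset.sum_congr rfl fun i _ => ?_
    rw [Dop_C_mul, Dop_mul_right _ _ _ _ (hW0 _) (hW1 _)]
  have e2 : Dop 2 3 (Ppoly n p d A B)
      = ∑ i ∈ Finset.range (d+1),
          C (((p+d).choose i : ℝ) * ((n+d).choose (d-i) : ℝ)) *
            (Dop 2 3 (GP (-1) 2 3 ^ (d-i) * B) * (GP 1 0 1 ^ i * A)) := by
    rw [Ppoly, Dop_sum]
    refine Finset.sum_congr rfl fun i _ => ?_
    rw [Dop_C_mul, mul_comm (GP 1 0 1 ^ i * A), Dop_mul_right _ _ _ _ (hU2 _) (hU3 _)]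
  rw [e1, e2, Finset.sum_range_succ' _ d, Finset.sum_range_succ _ d]
  have z1 : Dop 0 1 (GP 1 0 1 ^ 0 * A) = 0 := by rw [pow_zero, one_mul, hAH]
  have z2 : Dop 2 3 (GP (-1) 2 3 ^ (d-d) * B) = 0 := by
    rw [Nat.sub_self, pow_zero, one_mul, hBH]
  rw [z1, z2]
  simp only [mul_zero, zero_mul, add_zero]
  rw [← Finset.sum_add_distrib]
  apply Finset.sum_eq_zero
  intro i hi
  have hid : i < d := Finset.mem_range.mp hi
  rw [lap_pow 1 0 1 h01 n A hAE hAH i,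
    show d - i = (d - (i+1)) + 1 from by omega,
    lap_pow (-1) 2 3 h23 p B hBE hBH (d-(i+1))]
  rw [show d - (i+1) + 1 = d - i from by omega]
  have key := binom_id n p d i hid
  have key2 : (C ((((p+d).choose (i+1):ℝ)) * (((n+d).choose (d-(i+1)):ℝ))) : P4) *
        C (4*1*((i:ℝ)+1)*((i:ℝ)+1+(n:ℝ)))
      + C ((((p+d).choose i:ℝ)) * (((n+d).choose (d-i):ℝ))) *
        C (4*(-1)*((((d-(i+1)):ℕ):ℝ)+1)*((((d-(i+1)):ℕ):ℝ)+1+(p:ℝ))) = 0 := by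
    rw [← map_mul, ← map_mul, ← map_add, key, map_zero]
  linear_combination ((GP 1 0 1 ^ i * A) * (GP (-1) 2 3 ^ (d-(i+1)) * B)) * key2

lemma homog_GP (ε : ℝ) (a b : Fin 4) : (GP ε a b).IsHomogeneous 2 := by
  have : ((X a * X a + X b * X b : P4)).IsHomogeneous 2 := by
    have h1 := (isHomogeneous_X ℝ a).mul (isHomogeneous_X ℝ a)
    have h2 := (isHomogeneous_X ℝ b).mul (isHomogeneous_X ℝ b)
    exact h1.add h2
  exact this.C_mul ε

lemma homog_Ppoly (n p d : ℕ) (A B : P4)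
    (hA : A.IsHomogeneous n) (hB : B.IsHomogeneous p) :
    (Ppoly n p d A B).IsHomogeneous (2*d + n + p) := by
  apply MvPolynomial.IsHomogeneous.sum
  intro i hi
  have hid : i ≤ d := by
    have := Finset.mem_range.mp hi; omega
  have h1 : ((GP 1 0 1 ^ i * A) : P4).IsHomogeneous (2*i + n) :=
    ((homog_GP 1 0 1).pow i).mul hA
  have h2 : ((GP (-1) 2 3 ^ (d-i) * B) : P4).IsHomogeneous (2*(d-i) + p) :=
    ((homog_GP (-1) 2 3).pow (d-i)).mul hB
  have h3 := (h1.mul h2).C_mul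
    (((p+d).choose i : ℝ) * ((n+d).choose (d-i) : ℝ))
  rwa [show 2*i + n + (2*(d-i) + p) = 2*d + n + p from by omega] at h3

lemma eval_Ppoly (n p d : ℕ) (A B : P4) (v : Fin 4 → ℝ) :
    eval v (Ppoly n p d A B) =
      (∑ i ∈ Finset.range (d+1),
        ((p+d).choose i : ℝ) * ((n+d).choose (d-i) : ℝ) *
          (v 0 ^ 2 + v 1 ^ 2) ^ i * (-(v 2 ^ 2 + v 3 ^ 2)) ^ (d-i))
        * eval v A * eval v B := by
  rw [Ppoly, map_sum, Finset.sum_mul, Finset.sum_mul]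
  refine Finset.sum_congr rfl fun i _ => ?_
  simp only [map_mul, eval_C, map_pow, GP, map_add, eval_X, map_one, map_neg]
  ring

lemma hasFDerivAt_evalP (v : Fin 4 → ℝ) (Q : P4) :
    HasFDerivAt (fun w => eval w Q)
      (∑ i : Fin 4, eval v (pderiv i Q) •
        (ContinuousLinearMap.proj i : (Fin 4 → ℝ) →L[ℝ] ℝ)) v := by
  induction Q using MvPolynomial.induction_on with
  | C a =>
    simp only [pderiv_C, map_zero, zero_smul, Finset.sum_const_zero, eval_C]
    exact hasFDerivAt_const _ _
  | add q r hq hr =>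
    have h := hq.add hr
    have hfun : (fun w => eval w (q + r)) = fun w => eval w q + eval w r := by
      funext w; simp
    rw [hfun]
    refine h.congr_fderiv (Eq.symm ?_)
    rw [← Finset.sum_add_distrib]
    refine Finset.sum_congr rfl fun i _ => ?_
    simp [add_smul]
  | mul_X q j hq =>
    have hXj : HasFDerivAt (fun w : Fin 4 → ℝ => w j)
        (ContinuousLinearMap.proj j : (Fin 4 → ℝ) →L[ℝ] ℝ) v :=
      hasFDerivAt_apply j v
    have h := hq.mul hXj
    have hfun : (fun w => eval w (q * X j)) = fun w => eval w q * w j := by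
      funext w; simp
    rw [hfun]
    refine h.congr_fderiv (Eq.symm ?_)
    ext u
    classical
    simp only [ContinuousLinearMap.sum_apply, ContinuousLinearMap.smul_apply,
      ContinuousLinearMap.proj_apply, ContinuousLinearMap.add_apply,
      pderiv_mul, map_add, eval_mul, eval_X, smul_eq_mul, pderiv_X,
      Pi.single_apply, apply_ite (eval v), map_one, map_zero]
    simp only [mul_ite, mul_one, mul_zero, add_mul, ite_mul, zero_mul]
    rw [Finset.sum_add_distrib, Finset.sum_ite_eq]
    simp only [Finset.mem_univ, if_true, Finset.mul_sum]
    rw [add_comm]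
    congr 1
    exact Finset.sum_congr rfl fun x _ => by ring

lemma fderiv_eval_single (Q : P4) (w : Fin 4 → ℝ) (i : Fin 4) :
    fderiv ℝ (fun v => eval v Q) w (Pi.single i 1) = eval w (pderiv i Q) := by
  classical
  rw [(hasFDerivAt_evalP w Q).fderiv]
  simp only [ContinuousLinearMap.sum_apply, ContinuousLinearMap.smul_apply,
    ContinuousLinearMap.proj_apply, Pi.single_apply, smul_eq_mul,
    mul_ite, mul_one, mul_zero]
  rw [Finset.sum_ite_eq' Finset.univ i (fun j => eval w (pderiv j Q))]
  simp

open MvPolynomial in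
lemma isHarmonic_eval (Q : P4) (h : Dop 0 1 Q + Dop 2 3 Q = 0) :
    IsHarmonic (fun v => eval v Q) := by
  intro v
  have h1 : ∀ i : Fin 4, (fun w => fderiv ℝ (fun v => eval v Q) w (Pi.single i 1))
      = fun w => eval w (pderiv i Q) := fun i => funext fun w => fderiv_eval_single Q w i
  calc ∑ i : Fin 4,
        fderiv ℝ (fun w => fderiv ℝ (fun v => eval v Q) w (Pi.single i 1)) v (Pi.single i 1)
      = ∑ i : Fin 4, eval v (pderiv i (pderiv i Q)) := by
        refine Finset.sum_congr rfl fun i _ => ?_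
        rw [h1 i, fderiv_eval_single]
    _ = eval v (Dop 0 1 Q + Dop 2 3 Q) := by
        rw [Fin.sum_univ_four]
        simp only [Dop, map_add]
        ring
    _ = 0 := by rw [h]; simp

/-- For all integers `k ≥ 0` and `ℓ, m` with `|ℓ| + |m| ≤ k` and
`ℓ + m ≡ k (mod 2)`, the function `F_{kℓm}` is the evaluation of a homogeneous
polynomial of degree `k` and is harmonic on `ℝ⁴`. -/
theorem stmt_0 (k : ℕ) (ℓ m : ℤ) (h1 : ℓ.natAbs + m.natAbs ≤ k)
    (h2 : Int.ModEq 2 (ℓ + m) k) :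
    IsHomogeneousPolyEval k (F k ℓ m) ∧ IsHarmonic (F k ℓ m) := by
  classical
  have hk : 2 * dd k ℓ m + ℓ.natAbs + m.natAbs = k := by
    have h2' : (ℓ + m) % 2 = (k : ℤ) % 2 := h2
    unfold dd
    omega
  obtain ⟨A, hAhom, hAE, hAH, hA2, hA3, hAeval⟩ : ∃ A : P4, A.IsHomogeneous ℓ.natAbs ∧
      Eop 0 1 A = MvPolynomial.C (ℓ.natAbs : ℝ) * A ∧ Dop 0 1 A = 0 ∧
      MvPolynomial.pderiv 2 A = 0 ∧ MvPolynomial.pderiv 3 A = 0 ∧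
      ∀ v : Fin 4 → ℝ, MvPolynomial.eval v A = circ ℓ (v 0) (v 1) := by
    by_cases h : 0 ≤ ℓ
    · refine ⟨(csP 0 1 ℓ.natAbs).1, (homog_csP 0 1 _).1, (euler_csP 0 1 (by decide) _).1,
        (harm_csP 0 1 (by decide) _).1, (pderiv_csP_other 0 1 2 (by decide) (by decide) _).1,
        (pderiv_csP_other 0 1 3 (by decide) (by decide) _).1, fun v => ?_⟩
      rw [(eval_csP 0 1 _ v).1, circ, if_pos h]
    · refine ⟨(csP 0 1 ℓ.natAbs).2, (homog_csP 0 1 _).2, (euler_csP 0 1 (by decide) _).2,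
        (harm_csP 0 1 (by decide) _).2, (pderiv_csP_other 0 1 2 (by decide) (by decide) _).2,
        (pderiv_csP_other 0 1 3 (by decide) (by decide) _).2, fun v => ?_⟩
      rw [(eval_csP 0 1 _ v).2, circ, if_neg h]
  obtain ⟨B, hBhom, hBE, hBH, hB0, hB1, hBeval⟩ : ∃ B : P4, B.IsHomogeneous m.natAbs ∧
      Eop 2 3 B = MvPolynomial.C (m.natAbs : ℝ) * B ∧ Dop 2 3 B = 0 ∧
      MvPolynomial.pderiv 0 B = 0 ∧ MvPolynomial.pderiv 1 B = 0 ∧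
      ∀ v : Fin 4 → ℝ, MvPolynomial.eval v B = circ m (v 2) (v 3) := by
    by_cases h : 0 ≤ m
    · refine ⟨(csP 2 3 m.natAbs).1, (homog_csP 2 3 _).1, (euler_csP 2 3 (by decide) _).1,
        (harm_csP 2 3 (by decide) _).1, (pderiv_csP_other 2 3 0 (by decide) (by decide) _).1,
        (pderiv_csP_other 2 3 1 (by decide) (by decide) _).1, fun v => ?_⟩
      rw [(eval_csP 2 3 _ v).1, circ, if_pos h]
    · refine ⟨(csP 2 3 m.natAbs).2, (homog_csP 2 3 _).2, (euler_csP 2 3 (by decide) _).2,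
        (harm_csP 2 3 (by decide) _).2, (pderiv_csP_other 2 3 0 (by decide) (by decide) _).2,
        (pderiv_csP_other 2 3 1 (by decide) (by decide) _).2, fun v => ?_⟩
      rw [(eval_csP 2 3 _ v).2, circ, if_neg h]
  have hFeq : F k ℓ m = fun v => MvPolynomial.eval v
      (Ppoly ℓ.natAbs m.natAbs (dd k ℓ m) A B) := by
    funext v
    rw [eval_Ppoly, hAeval v, hBeval v]
    simp only [F]
  constructor
  · refine ⟨Ppoly ℓ.natAbs m.natAbs (dd k ℓ m) A B, ?_, fun v => by rw [hFeq]⟩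
    have h := homog_Ppoly ℓ.natAbs m.natAbs (dd k ℓ m) A B hAhom hBhom
    rwa [hk] at h
  · rw [hFeq]
    exact isHarmonic_eval _ (lap_Ppoly _ _ _ A B hAE hAH hA2 hA3 hBE hBH hB0 hB1)

end
end

section
/- For all integers k ≥ 0 and ℓ, m with |ℓ| + |m| ≤ k and ℓ + m ≡ k (mod 2), and all real χ, θ, φ: F_{kℓm}(cos χ · cos θ, cos χ · sin θ, sin χ · cos φ, sin χ · sin φ) = Ψ̃_{kℓm}(χ, θ, φ). -/
noncomputable section


/-- Auxiliary: `circ` at polar-form arguments. -/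
lemma circ_eval (j : ℤ) (r θ : ℝ) :
    circ j (r * Real.cos θ) (r * Real.sin θ) = r ^ j.natAbs * circHarm j θ := by
  have key : ((r * Real.cos θ : ℝ) : ℂ) + (r * Real.sin θ : ℝ) * Complex.I
      = (r : ℂ) * Complex.exp (θ * Complex.I) := by
    rw [Complex.exp_mul_I]
    push_cast [Complex.ofReal_cos, Complex.ofReal_sin]
    ring
  have key2 : (((r * Real.cos θ : ℝ) : ℂ) + (r * Real.sin θ : ℝ) * Complex.I) ^ j.natAbs
      = (r ^ j.natAbs : ℝ) * Complex.exp ((j.natAbs * θ : ℝ) * Complex.I) := by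
    rw [key, mul_pow, ← Complex.exp_nat_mul]
    push_cast
    ring_nf
  unfold circ circHarm
  rw [key2]
  split
  · rw [Complex.re_ofReal_mul, Complex.exp_ofReal_mul_I_re]
  · rw [Complex.im_ofReal_mul, Complex.exp_ofReal_mul_I_im]

/-- `F_{kℓm}` evaluated at toroidal coordinates equals `Ψ̃_{kℓm}`. -/
theorem stmt_1 (k : ℕ) (ℓ m : ℤ) (h1 : ℓ.natAbs + m.natAbs ≤ k)
    (h2 : Int.ModEq 2 (ℓ + m) k) (χ θ φ : ℝ) :
    F k ℓ m ![Real.cos χ * Real.cos θ, Real.cos χ * Real.sin θ,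
              Real.sin χ * Real.cos φ, Real.sin χ * Real.sin φ]
      = PsiT k ℓ m χ θ φ := by
  have hx : (Real.cos χ * Real.cos θ) ^ 2 + (Real.cos χ * Real.sin θ) ^ 2
      = Real.cos χ ^ 2 := by
    rw [mul_pow, mul_pow, ← mul_add, Real.cos_sq_add_sin_sq, mul_one]
  have hz : (Real.sin χ * Real.cos φ) ^ 2 + (Real.sin χ * Real.sin φ) ^ 2
      = Real.sin χ ^ 2 := by
    rw [mul_pow, mul_pow, ← mul_add, Real.cos_sq_add_sin_sq, mul_one]
  have hsum : ∑ i ∈ Finset.range (dd k ℓ m + 1),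
      (Nat.choose (m.natAbs + dd k ℓ m) i : ℝ) *
      (Nat.choose (ℓ.natAbs + dd k ℓ m) (dd k ℓ m - i) : ℝ) *
      (Real.cos χ ^ 2) ^ i * (-(Real.sin χ ^ 2)) ^ (dd k ℓ m - i)
      = jacobiP (dd k ℓ m) m.natAbs ℓ.natAbs (Real.cos (2 * χ)) := by
    unfold jacobiP
    rw [Finset.mul_sum]
    refine Finset.sum_congr rfl fun i hi => ?_
    have hi' : i ≤ dd k ℓ m := Finset.mem_range_succ_iff.mp hi
    have h1 : Real.cos (2 * χ) + 1 = 2 * Real.cos χ ^ 2 := by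
      rw [Real.cos_two_mul]; ring
    have h2 : Real.cos (2 * χ) - 1 = 2 * (-(Real.sin χ ^ 2)) := by
      rw [Real.cos_two_mul, Real.sin_sq]; ring
    rw [h1, h2, mul_pow, mul_pow]
    have hp : (2 : ℝ) ^ i * 2 ^ (dd k ℓ m - i) = 2 ^ dd k ℓ m := by
      rw [← pow_add, Nat.add_sub_cancel' hi']
    field_simp
    linear_combination (-((Nat.choose (m.natAbs + dd k ℓ m) i : ℝ) *
      (Nat.choose (ℓ.natAbs + dd k ℓ m) (dd k ℓ m - i) : ℝ) *
      (Real.cos χ ^ 2) ^ i * (-(Real.sin χ ^ 2)) ^ (dd k ℓ m - i))) * hp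
  unfold F PsiT Xrad
  simp only [Matrix.cons_val_zero, Matrix.cons_val_one, Matrix.head_cons,
    Matrix.cons_val_two, Matrix.tail_cons, Matrix.cons_val_three]
  rw [circ_eval, circ_eval, hx, hz, hsum]
  ring


end
end

section
/- For all integers k ≥ 0 and ℓ, m with |ℓ| + |m| ≤ k and ℓ + m ≡ k (mod 2), and for every real χ, the radial function X_{kℓm} satisfies the separated Helmholtz equation: cos χ · sin χ · (d/dχ)(cos χ · sin χ · X′_{kℓm}(χ)) − (ℓ²·sin²χ + m²·cos²χ)·X_{kℓm}(χ) = −k(k+2)·cos²χ·sin²χ·X_{kℓm}(χ). -/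
noncomputable section


namespace Stmt2Aux
open Finset

def cc (L M d i : ℕ) : ℝ := (-1)^(d-i) * ((M+d).choose i : ℝ) * ((L+d).choose (d-i) : ℝ)
def uR (L : ℕ) (i : ℕ) : ℝ := 4*(i:ℝ)*((L:ℝ)+i)
def wR (M d : ℕ) (i : ℕ) : ℝ := 4*((d-i : ℕ):ℝ)*((M:ℝ)+((d-i:ℕ):ℝ))
def vR (L M d i : ℕ) : ℝ :=
  ((L:ℝ)+M+2*d)*((L:ℝ)+M+2*d+2) - 2*((L:ℝ)+2*i)*((M:ℝ)+2*((d-i:ℕ):ℝ))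
    - 2*((L:ℝ)+2*i) - 2*((M:ℝ)+2*((d-i:ℕ):ℝ)) - (L:ℝ)^2 - (M:ℝ)^2

lemma uR_zero (L : ℕ) : uR L 0 = 0 := by simp [uR]
lemma wR_zero (M d : ℕ) : wR M d d = 0 := by simp [wR]

lemma vR_eq (L M j e : ℕ) : vR L M (j+e) j = 4*((M:ℝ)+e)*e + 4*(j:ℝ)*((L:ℝ)+j) := by
  unfold vR
  rw [show j + e - j = e from by omega]
  push_cast
  ring

lemma keycoef (L M d : ℕ) (j : ℕ) (hj : j ≤ d) :
    (if j+1 ≤ d then cc L M d (j+1) * uR L (j+1) else 0)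
    + cc L M d j * vR L M d j
    + (if 1 ≤ j then cc L M d (j-1) * wR M d (j-1) else 0) = 0 := by
  obtain ⟨e, rfl⟩ : ∃ e, d = j + e := ⟨d - j, by omega⟩
  have hccj : cc L M (j+e) j = (-1)^e * ((M+(j+e)).choose j : ℝ) * ((L+(j+e)).choose e : ℝ) := by
    unfold cc; rw [show j + e - j = e from by omega]
  have h1 : (if j+1 ≤ j+e then cc L M (j+e) (j+1) * uR L (j+1) else 0)
      = -((-1:ℝ)^e * ((M+(j+e)).choose j : ℝ) * ((L+(j+e)).choose e : ℝ) * (4*((M:ℝ)+e)*e)) := by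
    rcases e with _ | e'
    · simp
    · rw [if_pos (by omega)]
      unfold cc uR
      rw [show j + (e'+1) - (j+1) = e' from by omega]
      have hA : ((M+(j+(e'+1))).choose (j+1) : ℝ) * ((j:ℝ)+1)
          = ((M+(j+(e'+1))).choose j : ℝ) * ((M:ℝ)+(e'+1)) := by
        have := Nat.choose_succ_right_eq (M+(j+(e'+1))) j
        rw [show M+(j+(e'+1)) - j = M + (e'+1) from by omega] at this
        exact_mod_cast this
      have hB : ((L+(j+(e'+1))).choose (e'+1) : ℝ) * ((e':ℝ)+1)
          = ((L+(j+(e'+1))).choose e' : ℝ) * ((L:ℝ)+(j+1)) := by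
        have := Nat.choose_succ_right_eq (L+(j+(e'+1))) e'
        rw [show L+(j+(e'+1)) - e' = L + (j+1) from by omega] at this
        exact_mod_cast this
      push_cast at hA hB ⊢
      linear_combination (4*(-1:ℝ)^e' * (((L+(j+(e'+1))).choose e' : ℝ) * ((L:ℝ)+(j:ℝ)+1))) * hA
        - (4*(-1:ℝ)^e' * (((M+(j+(e'+1))).choose j : ℝ) * ((M:ℝ)+(e':ℝ)+1))) * hB
  have h3 : (if 1 ≤ j then cc L M (j+e) (j-1) * wR M (j+e) (j-1) else 0)
      = -((-1:ℝ)^e * ((M+(j+e)).choose j : ℝ) * ((L+(j+e)).choose e : ℝ) * (4*(j:ℝ)*((L:ℝ)+j))) := by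
    rcases j with _ | j''
    · simp
    · rw [if_pos (by omega)]
      unfold cc wR
      rw [show j''+1-1 = j'' from rfl,
          show j''+1+e - j'' = e+1 from by omega]
      have hA : ((M+(j''+1+e)).choose (j''+1) : ℝ) * ((j'':ℝ)+1)
          = ((M+(j''+1+e)).choose j'' : ℝ) * ((M:ℝ)+(e+1)) := by
        have := Nat.choose_succ_right_eq (M+(j''+1+e)) j''
        rw [show M+(j''+1+e) - j'' = M + (e+1) from by omega] at this
        exact_mod_cast this
      have hB : ((L+(j''+1+e)).choose (e+1) : ℝ) * ((e:ℝ)+1)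
          = ((L+(j''+1+e)).choose e : ℝ) * ((L:ℝ)+(j''+1)) := by
        have := Nat.choose_succ_right_eq (L+(j''+1+e)) e
        rw [show L+(j''+1+e) - e = L + (j''+1) from by omega] at this
        exact_mod_cast this
      push_cast at hA hB ⊢
      linear_combination ((-1:ℝ)^e * 4 * (((L+(j''+1+e)).choose e : ℝ) * ((L:ℝ)+(j'':ℝ)+1))) * hA
        - ((-1:ℝ)^e * 4 * (((M+(j''+1+e)).choose j'' : ℝ) * ((M:ℝ)+(e:ℝ)+1))) * hB
  rw [h1, h3, hccj, vR_eq]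
  ring

lemma alg (L M d : ℕ) (x y : ℝ) :
    ∑ i ∈ Finset.range (d+1), cc L M d i *
      (uR L i * x^i * y^(d+2-i) + vR L M d i * x^(i+1) * y^(d+1-i)
        + wR M d i * x^(i+2) * y^(d-i)) = 0 := by
  set f0 : ℕ → ℝ := fun j => (if j ≤ d then cc L M d j * uR L j else 0) * x^j * y^(d+2-j) with hf0
  set f1 : ℕ → ℝ := fun j => (if 1 ≤ j ∧ j ≤ d+1 then cc L M d (j-1) * vR L M d (j-1) else 0)
      * x^j * y^(d+2-j) with hf1
  set f2 : ℕ → ℝ := fun j => (if 2 ≤ j then cc L M d (j-2) * wR M d (j-2) else 0)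
      * x^j * y^(d+2-j) with hf2
  have hsub : range (d+1) ⊆ range (d+3) := Finset.range_subset_range.mpr (by omega)
  have hsub2 : range (d+1) ⊆ range (d+2) := Finset.range_subset_range.mpr (by omega)
  have e0 : ∑ i ∈ range (d+1), cc L M d i * uR L i * x^i * y^(d+2-i)
      = ∑ j ∈ range (d+3), f0 j := by
    refine (Finset.sum_congr rfl fun i hi => ?_).trans
      (Finset.sum_subset hsub fun j _ hj => ?_)
    · simp only [Finset.mem_range] at hi
      rw [hf0]; simp only []; rw [if_pos (by omega : i ≤ d)]
    · simp only [Finset.mem_range] at hj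
      rw [hf0]; simp only []; rw [if_neg (by omega : ¬ j ≤ d), zero_mul, zero_mul]
  have e1 : ∑ i ∈ range (d+1), cc L M d i * vR L M d i * x^(i+1) * y^(d+1-i)
      = ∑ j ∈ range (d+3), f1 j := by
    have hstep : ∑ j ∈ range (d+3), f1 j = (∑ i ∈ range (d+2), f1 (i+1)) + f1 0 := by
      rw [show (d:ℕ)+3 = (d+2)+1 from rfl, Finset.sum_range_succ' f1 (d+2)]
    rw [hstep]
    have hz : f1 0 = 0 := by
      rw [hf1]; simp
    rw [hz, add_zero]
    refine (Finset.sum_congr rfl fun i hi => ?_).trans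
      (Finset.sum_subset hsub2 fun j _ hj => ?_)
    · simp only [Finset.mem_range] at hi
      rw [hf1]; simp only []
      rw [if_pos (by omega : 1 ≤ i+1 ∧ i+1 ≤ d+1), show i+1-1 = i from rfl,
        show d+2-(i+1) = d+1-i from by omega]
    · simp only [Finset.mem_range] at hj
      rw [hf1]; simp only []
      rw [if_neg (by omega : ¬ (1 ≤ j+1 ∧ j+1 ≤ d+1)), zero_mul, zero_mul]
  have e2 : ∑ i ∈ range (d+1), cc L M d i * wR M d i * x^(i+2) * y^(d-i)
      = ∑ j ∈ range (d+3), f2 j := by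
    have hstep : ∑ j ∈ range (d+3), f2 j
        = ((∑ i ∈ range (d+1), f2 (i+1+1)) + f2 (0+1)) + f2 0 := by
      rw [show (d:ℕ)+3 = (d+2)+1 from rfl, Finset.sum_range_succ' f2 (d+2),
        show (d:ℕ)+2 = (d+1)+1 from rfl, Finset.sum_range_succ' (fun i => f2 (i+1)) (d+1)]
    rw [hstep]
    have hz0 : f2 0 = 0 := by rw [hf2]; simp
    have hz1 : f2 (0+1) = 0 := by rw [hf2]; simp
    rw [hz0, hz1, add_zero, add_zero]
    refine Finset.sum_congr rfl fun i hi => ?_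
    simp only [Finset.mem_range] at hi
    rw [hf2]; simp only []
    rw [if_pos (by omega : 2 ≤ i+1+1), show i+1+1-2 = i from rfl,
      show d+2-(i+1+1) = d-i from by omega, show i+1+1 = i+2 from rfl]
  calc ∑ i ∈ Finset.range (d+1), cc L M d i *
      (uR L i * x^i * y^(d+2-i) + vR L M d i * x^(i+1) * y^(d+1-i)
        + wR M d i * x^(i+2) * y^(d-i))
      = ∑ i ∈ range (d+1), (cc L M d i * uR L i * x^i * y^(d+2-i)
        + (cc L M d i * vR L M d i * x^(i+1) * y^(d+1-i)
          + cc L M d i * wR M d i * x^(i+2) * y^(d-i))) :=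
        Finset.sum_congr rfl fun i _ => by ring
    _ = ∑ j ∈ range (d+3), (f0 j + (f1 j + f2 j)) := by
        rw [Finset.sum_add_distrib, Finset.sum_add_distrib, e0, e1, e2,
          ← Finset.sum_add_distrib, ← Finset.sum_add_distrib]
    _ = 0 := by
        apply Finset.sum_eq_zero
        intro j hj
        simp only [Finset.mem_range] at hj
        rw [hf0, hf1, hf2]; simp only []
        have key : (if j ≤ d then cc L M d j * uR L j else 0)
            + ((if 1 ≤ j ∧ j ≤ d+1 then cc L M d (j-1) * vR L M d (j-1) else 0)
            + (if 2 ≤ j then cc L M d (j-2) * wR M d (j-2) else 0)) = 0 := by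
          rcases j with _ | j'
          · simp [uR_zero]
          · by_cases hj' : j' ≤ d
            · have hkc := keycoef L M d j' hj'
              rw [if_pos (by omega : 1 ≤ j'+1 ∧ j'+1 ≤ d+1), show j'+1-1 = j' from rfl]
              have h2 : (if 2 ≤ j'+1 then cc L M d (j'+1-2) * wR M d (j'+1-2) else 0)
                  = (if 1 ≤ j' then cc L M d (j'-1) * wR M d (j'-1) else 0) := by
                rcases j' with _ | n
                · simp
                · rw [if_pos (by omega), if_pos (by omega),
                    show n+1+1-2 = n+1-1 from by omega]
              rw [h2]
              linarith [hkc]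
            · have hj2 : j' = d+1 := by omega
              subst hj2
              rw [if_neg (by omega : ¬ d+1+1 ≤ d),
                if_neg (by omega : ¬ (1 ≤ d+1+1 ∧ d+1+1 ≤ d+1)),
                if_pos (by omega : 2 ≤ d+1+1), show d+1+1-2 = d from rfl, wR_zero]
              simp
        calc (if j ≤ d then cc L M d j * uR L j else 0) * x^j * y^(d+2-j)
            + ((if 1 ≤ j ∧ j ≤ d+1 then cc L M d (j-1) * vR L M d (j-1) else 0) * x^j * y^(d+2-j)
            + (if 2 ≤ j then cc L M d (j-2) * wR M d (j-2) else 0) * x^j * y^(d+2-j))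
            = ((if j ≤ d then cc L M d j * uR L j else 0)
            + ((if 1 ≤ j ∧ j ≤ d+1 then cc L M d (j-1) * vR L M d (j-1) else 0)
            + (if 2 ≤ j then cc L M d (j-2) * wR M d (j-2) else 0))) * x^j * y^(d+2-j) := by ring
          _ = 0 := by rw [key, zero_mul, zero_mul]

def Tm (L M d i : ℕ) (x : ℝ) : ℝ := Real.cos x ^ (L+2*i) * Real.sin x ^ (M+2*(d-i))
def Dm (p q : ℕ) (x : ℝ) : ℝ :=
  (p:ℝ) * Real.cos x ^ (p-1) * -Real.sin x * Real.sin x ^ q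
    + Real.cos x ^ p * ((q:ℝ) * Real.sin x ^ (q-1) * Real.cos x)
def Um (L M d i : ℕ) (x : ℝ) : ℝ :=
  -((L+2*i : ℕ):ℝ) * (Real.cos x ^ (L+2*i) * Real.sin x ^ (M+2*(d-i)+2))
   + ((M+2*(d-i) : ℕ):ℝ) * (Real.cos x ^ (L+2*i+2) * Real.sin x ^ (M+2*(d-i)))
def DUm (L M d i : ℕ) (x : ℝ) : ℝ :=
  -((L+2*i : ℕ):ℝ) * Dm (L+2*i) (M+2*(d-i)+2) x
   + ((M+2*(d-i) : ℕ):ℝ) * Dm (L+2*i+2) (M+2*(d-i)) x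

lemma hasDerivAt_powmul (p q : ℕ) (x : ℝ) :
    HasDerivAt (fun y => Real.cos y ^ p * Real.sin y ^ q) (Dm p q x) x :=
  ((Real.hasDerivAt_cos x).pow p).mul ((Real.hasDerivAt_sin x).pow q)

lemma cs_Dm (p q : ℕ) (x : ℝ) : Real.cos x * Real.sin x * Dm p q x
    = -(p:ℝ) * (Real.cos x ^ p * Real.sin x ^ (q+2))
      + (q:ℝ) * (Real.cos x ^ (p+2) * Real.sin x ^ q) := by
  rcases p with _ | p <;> rcases q with _ | q <;>
    simp only [Dm, Nat.cast_zero, Nat.zero_sub, Nat.succ_sub_one, pow_zero] <;>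
    push_cast <;> ring

lemma hasDerivAt_Um (L M d i : ℕ) (x : ℝ) :
    HasDerivAt (Um L M d i) (DUm L M d i x) x := by
  unfold Um DUm
  exact ((hasDerivAt_powmul (L+2*i) (M+2*(d-i)+2) x).const_mul (-((L+2*i : ℕ):ℝ))).add
    ((hasDerivAt_powmul (L+2*i+2) (M+2*(d-i)) x).const_mul ((M+2*(d-i) : ℕ):ℝ))

lemma perterm (L M d i : ℕ) (hi : i ≤ d) (χ : ℝ) :
    Real.cos χ * Real.sin χ * DUm L M d i χ
      - (((L:ℕ):ℝ)^2*Real.sin χ^2 + ((M:ℕ):ℝ)^2*Real.cos χ^2) * Tm L M d i χ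
      + (((L:ℝ)+M+2*d)*((L:ℝ)+M+2*d+2)) * (Real.cos χ^2 * Real.sin χ^2) * Tm L M d i χ
    = Real.cos χ^L * Real.sin χ^M *
      (uR L i * (Real.cos χ^2)^i * (Real.sin χ^2)^(d+2-i)
        + vR L M d i * (Real.cos χ^2)^(i+1) * (Real.sin χ^2)^(d+1-i)
        + wR M d i * (Real.cos χ^2)^(i+2) * (Real.sin χ^2)^(d-i)) := by
  obtain ⟨e, rfl⟩ : ∃ e, d = i + e := ⟨d - i, by omega⟩
  unfold DUm Tm uR vR wR
  simp only [show i+e-i = e from by omega, show i+e+2-i = e+2 from by omega,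
    show i+e+1-i = e+1 from by omega]
  have h1 := cs_Dm (L+2*i) (M+2*e+2) χ
  have h2 := cs_Dm (L+2*i+2) (M+2*e) χ
  rw [show Real.cos χ * Real.sin χ *
      (-((L+2*i : ℕ):ℝ) * Dm (L+2*i) (M+2*e+2) χ
        + ((M+2*e : ℕ):ℝ) * Dm (L+2*i+2) (M+2*e) χ)
      = -((L+2*i : ℕ):ℝ) * (Real.cos χ * Real.sin χ * Dm (L+2*i) (M+2*e+2) χ)
        + ((M+2*e : ℕ):ℝ) * (Real.cos χ * Real.sin χ * Dm (L+2*i+2) (M+2*e) χ) from by ring,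
    h1, h2]
  rw [show Real.sin χ^(M+2*e+2+2) = Real.sin χ^M * (Real.sin χ^2)^(e+2) from by
      rw [← pow_mul, ← pow_add]; congr 1,
    show Real.sin χ^(M+2*e+2) = Real.sin χ^M * (Real.sin χ^2)^(e+1) from by
      rw [← pow_mul, ← pow_add]; congr 1,
    show Real.sin χ^(M+2*e) = Real.sin χ^M * (Real.sin χ^2)^e from by
      rw [← pow_mul, ← pow_add]]
  rw [Real.sin_sq]
  push_cast
  ring

lemma Xrad_eq (k : ℕ) (ℓ m : ℤ) (x : ℝ) :
    Xrad k ℓ m x = ∑ i ∈ Finset.range (dd k ℓ m + 1),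
      cc ℓ.natAbs m.natAbs (dd k ℓ m) i * Tm ℓ.natAbs m.natAbs (dd k ℓ m) i x := by
  set L := ℓ.natAbs with hL
  set M := m.natAbs with hM
  set d := dd k ℓ m with hd
  unfold Xrad jacobiP
  rw [← hL, ← hM, ← hd]
  rw [Finset.mul_sum, Finset.mul_sum]
  refine Finset.sum_congr rfl fun i hi => ?_
  simp only [Finset.mem_range] at hi
  obtain ⟨e, hde⟩ : ∃ e, d = i + e := ⟨d - i, by omega⟩
  rw [show Real.cos (2*x) + 1 = 2*Real.cos x^2 from by rw [Real.cos_two_mul]; ring,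
    show Real.cos (2*x) - 1 = -(2*Real.sin x^2) from by
      rw [Real.cos_two_mul', ← Real.sin_sq_add_cos_sq x]; ring]
  unfold cc Tm
  rw [hde, show i+e-i = e from by omega, pow_add (2:ℝ) i e]
  rw [show (-(2*Real.sin x^2))^e = (-1:ℝ)^e * 2^e * (Real.sin x^2)^e from by
      rw [neg_pow, mul_pow]; ring,
    show (2*Real.cos x^2)^i = 2^i * (Real.cos x^2)^i from by rw [mul_pow]]
  have h2i : ((2:ℝ)^i) ≠ 0 := by positivity
  have h2e : ((2:ℝ)^e) ≠ 0 := by positivity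
  field_simp
  ring

end Stmt2Aux

/-- the radial function `X_{kℓm}` satisfies the separated
Helmholtz equation. -/
theorem stmt_2 (k : ℕ) (ℓ m : ℤ) (h1 : ℓ.natAbs + m.natAbs ≤ k)
    (h2 : Int.ModEq 2 (ℓ + m) k) (χ : ℝ) :
    Real.cos χ * Real.sin χ *
        deriv (fun x => Real.cos x * Real.sin x * deriv (Xrad k ℓ m) x) χ
      - ((ℓ : ℝ) ^ 2 * Real.sin χ ^ 2 + (m : ℝ) ^ 2 * Real.cos χ ^ 2) * Xrad k ℓ m χ
      = -((k : ℝ) * ((k : ℝ) + 2)) * Real.cos χ ^ 2 * Real.sin χ ^ 2 * Xrad k ℓ m χ := by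
  open Stmt2Aux in
  have hknat : k = ℓ.natAbs + m.natAbs + 2 * dd k ℓ m := by
    have h2' : (ℓ + m) % 2 = (k:ℤ) % 2 := h2
    unfold dd
    omega
  have hkR : (k:ℝ) = (ℓ.natAbs : ℝ) + (m.natAbs : ℝ) + 2*(dd k ℓ m : ℝ) := by
    exact_mod_cast congrArg (Nat.cast : ℕ → ℝ) hknat
  have hXder : ∀ x, HasDerivAt (Xrad k ℓ m)
      (∑ i ∈ Finset.range (dd k ℓ m + 1), cc ℓ.natAbs m.natAbs (dd k ℓ m) i
        * Dm (ℓ.natAbs + 2*i) (m.natAbs + 2*(dd k ℓ m - i)) x) x := by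
    intro x
    have hXf : Xrad k ℓ m = fun y => ∑ i ∈ Finset.range (dd k ℓ m + 1),
        cc ℓ.natAbs m.natAbs (dd k ℓ m) i * Tm ℓ.natAbs m.natAbs (dd k ℓ m) i y :=
      funext fun y => Stmt2Aux.Xrad_eq k ℓ m y
    rw [hXf]
    exact HasDerivAt.fun_sum fun i _ =>
      ((hasDerivAt_powmul (ℓ.natAbs + 2*i) (m.natAbs + 2*(dd k ℓ m - i)) x).const_mul
        (cc ℓ.natAbs m.natAbs (dd k ℓ m) i))
  have hfun : (fun x => Real.cos x * Real.sin x * deriv (Xrad k ℓ m) x)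
      = fun x => ∑ i ∈ Finset.range (dd k ℓ m + 1),
          cc ℓ.natAbs m.natAbs (dd k ℓ m) i * Um ℓ.natAbs m.natAbs (dd k ℓ m) i x := by
    funext x
    rw [(hXder x).deriv, Finset.mul_sum]
    refine Finset.sum_congr rfl fun i _ => ?_
    rw [show Real.cos x * Real.sin x * (cc ℓ.natAbs m.natAbs (dd k ℓ m) i
        * Dm (ℓ.natAbs + 2*i) (m.natAbs + 2*(dd k ℓ m - i)) x)
        = cc ℓ.natAbs m.natAbs (dd k ℓ m) i * (Real.cos x * Real.sin x
          * Dm (ℓ.natAbs + 2*i) (m.natAbs + 2*(dd k ℓ m - i)) x) from by ring,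
      cs_Dm]
    rfl
  have hder2 : deriv (fun x => Real.cos x * Real.sin x * deriv (Xrad k ℓ m) x) χ
      = ∑ i ∈ Finset.range (dd k ℓ m + 1),
          cc ℓ.natAbs m.natAbs (dd k ℓ m) i * DUm ℓ.natAbs m.natAbs (dd k ℓ m) i χ := by
    rw [hfun]
    exact (HasDerivAt.fun_sum fun i _ =>
      (hasDerivAt_Um ℓ.natAbs m.natAbs (dd k ℓ m) i χ).const_mul
        (cc ℓ.natAbs m.natAbs (dd k ℓ m) i)).deriv
  have hl2 : ((ℓ:ℝ))^2 = ((ℓ.natAbs : ℕ):ℝ)^2 := by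
    rw [Nat.cast_natAbs, Int.cast_abs, sq_abs]
  have hm2 : ((m:ℝ))^2 = ((m.natAbs : ℕ):ℝ)^2 := by
    rw [Nat.cast_natAbs, Int.cast_abs, sq_abs]
  rw [hder2, Xrad_eq k ℓ m χ, ← sub_eq_zero, hl2, hm2, hkR]
  rw [Finset.mul_sum, Finset.mul_sum, Finset.mul_sum]
  rw [← Finset.sum_sub_distrib, ← Finset.sum_sub_distrib]
  have hfin : ∀ i ∈ Finset.range (dd k ℓ m + 1),
      Real.cos χ * Real.sin χ * (cc ℓ.natAbs m.natAbs (dd k ℓ m) i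
          * DUm ℓ.natAbs m.natAbs (dd k ℓ m) i χ)
        - ((ℓ.natAbs : ℝ)^2 * Real.sin χ^2 + (m.natAbs : ℝ)^2 * Real.cos χ^2)
          * (cc ℓ.natAbs m.natAbs (dd k ℓ m) i * Tm ℓ.natAbs m.natAbs (dd k ℓ m) i χ)
        - -(((ℓ.natAbs : ℝ) + (m.natAbs : ℝ) + 2*(dd k ℓ m : ℝ))
            * (((ℓ.natAbs : ℝ) + (m.natAbs : ℝ) + 2*(dd k ℓ m : ℝ)) + 2))
          * Real.cos χ^2 * Real.sin χ^2
          * (cc ℓ.natAbs m.natAbs (dd k ℓ m) i * Tm ℓ.natAbs m.natAbs (dd k ℓ m) i χ)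
      = Real.cos χ ^ ℓ.natAbs * Real.sin χ ^ m.natAbs *
          (cc ℓ.natAbs m.natAbs (dd k ℓ m) i *
            (uR ℓ.natAbs i * (Real.cos χ^2)^i * (Real.sin χ^2)^(dd k ℓ m + 2 - i)
              + vR ℓ.natAbs m.natAbs (dd k ℓ m) i * (Real.cos χ^2)^(i+1)
                * (Real.sin χ^2)^(dd k ℓ m + 1 - i)
              + wR m.natAbs (dd k ℓ m) i * (Real.cos χ^2)^(i+2)
                * (Real.sin χ^2)^(dd k ℓ m - i))) := by
    intro i hi
    have hi' : i ≤ dd k ℓ m := by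
      simp only [Finset.mem_range] at hi; omega
    have pt := perterm ℓ.natAbs m.natAbs (dd k ℓ m) i hi' χ
    linear_combination (cc ℓ.natAbs m.natAbs (dd k ℓ m) i) * pt
  rw [Finset.sum_congr rfl hfin, ← Finset.mul_sum,
    alg ℓ.natAbs m.natAbs (dd k ℓ m) (Real.cos χ^2) (Real.sin χ^2), mul_zero]


end
end

section
/- For all integers k ≥ 0 and ℓ > 0, m > 0 with ℓ + m ≤ k and ℓ + m ≡ k (mod 2), and all real Δθ, Δφ: F_{k,ℓ,−m} ∘ R(Δθ,Δφ) = cos(ℓΔθ)·sin(mΔφ)·F_{k,ℓ,m} + cos(ℓΔθ)·cos(mΔφ)·F_{k,ℓ,−m} − sin(ℓΔθ)·sin(mΔφ)·F_{k,−ℓ,m} − sin(ℓΔθ)·cos(mΔφ)·F_{k,−ℓ,−m}. -/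
noncomputable section


lemma pow_rot (n : ℕ) (a x y : ℝ) :
    ((((x * Real.cos a - y * Real.sin a : ℝ) : ℂ)
        + (x * Real.sin a + y * Real.cos a : ℝ) * Complex.I) ^ n)
      = (((x : ℂ) + y * Complex.I) ^ n) * Complex.exp (((n * a : ℝ) : ℂ) * Complex.I) := by
  have h : (((x * Real.cos a - y * Real.sin a : ℝ) : ℂ)
        + (x * Real.sin a + y * Real.cos a : ℝ) * Complex.I)
      = ((x : ℂ) + y * Complex.I) * Complex.exp ((a : ℂ) * Complex.I) := by
    rw [Complex.exp_mul_I]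
    push_cast [← Complex.ofReal_cos, ← Complex.ofReal_sin]
    linear_combination (-(y:ℂ) * Real.sin a) * Complex.I_sq
  rw [h, mul_pow, ← Complex.exp_nat_mul]
  push_cast
  ring_nf

lemma re_rot (n : ℕ) (a x y : ℝ) :
    ((((x * Real.cos a - y * Real.sin a : ℝ) : ℂ)
        + (x * Real.sin a + y * Real.cos a : ℝ) * Complex.I) ^ n).re
      = Real.cos (n * a) * (((x : ℂ) + y * Complex.I) ^ n).re
        - Real.sin (n * a) * (((x : ℂ) + y * Complex.I) ^ n).im := by
  rw [pow_rot, Complex.exp_mul_I]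
  simp [Complex.mul_re, Complex.mul_im, ← Complex.ofReal_cos, ← Complex.ofReal_sin,
    ← Complex.ofReal_natCast, ← Complex.ofReal_mul]
  ring

lemma im_rot (n : ℕ) (a x y : ℝ) :
    ((((x * Real.cos a - y * Real.sin a : ℝ) : ℂ)
        + (x * Real.sin a + y * Real.cos a : ℝ) * Complex.I) ^ n).im
      = Real.sin (n * a) * (((x : ℂ) + y * Complex.I) ^ n).re
        + Real.cos (n * a) * (((x : ℂ) + y * Complex.I) ^ n).im := by
  rw [pow_rot, Complex.exp_mul_I]
  simp [Complex.mul_re, Complex.mul_im, ← Complex.ofReal_cos, ← Complex.ofReal_sin,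
    ← Complex.ofReal_natCast, ← Complex.ofReal_mul]
  ring

lemma rot_sq (a x y : ℝ) :
    (x * Real.cos a - y * Real.sin a) ^ 2 + (x * Real.sin a + y * Real.cos a) ^ 2
      = x ^ 2 + y ^ 2 := by
  nlinarith [Real.sin_sq_add_cos_sq a]

/-- the action of the rotation `R(Δθ, Δφ)` on `F_{k,ℓ,−m}`. -/
theorem stmt_8 (k : ℕ) (ℓ m : ℤ) (hl : 0 < ℓ) (hm : 0 < m)
    (h1 : ℓ + m ≤ (k : ℤ)) (h2 : Int.ModEq 2 (ℓ + m) k) (Δθ Δφ : ℝ) :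
    F k ℓ (-m) ∘ Rrot Δθ Δφ
      = fun v => Real.cos (ℓ * Δθ) * Real.sin (m * Δφ) * F k ℓ m v
          + Real.cos (ℓ * Δθ) * Real.cos (m * Δφ) * F k ℓ (-m) v
          - Real.sin (ℓ * Δθ) * Real.sin (m * Δφ) * F k (-ℓ) m v
          - Real.sin (ℓ * Δθ) * Real.cos (m * Δφ) * F k (-ℓ) (-m) v := by
  funext p
  simp only [Function.comp_apply]
  have hRl : ¬ (0:ℤ) ≤ -ℓ := by omega
  have hRm : ¬ (0:ℤ) ≤ -m := by omega
  have e0 : Rrot Δθ Δφ p 0 = p 0 * Real.cos Δθ - p 1 * Real.sin Δθ := rfl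
  have e1 : Rrot Δθ Δφ p 1 = p 0 * Real.sin Δθ + p 1 * Real.cos Δθ := rfl
  have e2 : Rrot Δθ Δφ p 2 = p 2 * Real.cos Δφ - p 3 * Real.sin Δφ := rfl
  have e3 : Rrot Δθ Δφ p 3 = p 2 * Real.sin Δφ + p 3 * Real.cos Δφ := rfl
  have hd1 : dd k ℓ (-m) = dd k ℓ m := by simp [dd]
  have hd2 : dd k (-ℓ) m = dd k ℓ m := by simp [dd]
  have hd3 : dd k (-ℓ) (-m) = dd k ℓ m := by simp [dd]
  have hcl : ((ℓ.natAbs : ℝ)) = (ℓ : ℝ) := by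
    rw [← Int.cast_natCast (R := ℝ), Int.natAbs_of_nonneg hl.le]
  have hcm : ((m.natAbs : ℝ)) = (m : ℝ) := by
    rw [← Int.cast_natCast (R := ℝ), Int.natAbs_of_nonneg hm.le]
  simp only [F, circ, hd1, hd2, hd3, Int.natAbs_neg, e0, e1, e2, e3,
    if_pos hl.le, if_pos hm.le, if_neg hRl, if_neg hRm, rot_sq, re_rot, im_rot, hcl, hcm]
  ring

end
end

section
/- For all integers k ≥ 0 and ℓ > 0 with ℓ ≤ k and ℓ ≡ k (mod 2), and all real Δθ, Δφ: F_{k,ℓ,0} ∘ R(Δθ,Δφ) = cos(ℓΔθ)·F_{k,ℓ,0} − sin(ℓΔθ)·F_{k,−ℓ,0}, and F_{k,−ℓ,0} ∘ R(Δθ,Δφ) = sin(ℓΔθ)·F_{k,ℓ,0} + cos(ℓΔθ)·F_{k,−ℓ,0}. -/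
noncomputable section


lemma rot_pow (n : ℕ) (a x y : ℝ) :
    (((x * Real.cos a - y * Real.sin a : ℝ) : ℂ)
        + ((x * Real.sin a + y * Real.cos a : ℝ) : ℂ) * Complex.I) ^ n
    = ((Real.cos (n * a) : ℂ) + (Real.sin (n * a) : ℂ) * Complex.I)
        * (((x : ℂ) + (y : ℂ) * Complex.I) ^ n) := by
  have h1 : (((x * Real.cos a - y * Real.sin a : ℝ) : ℂ)
      + ((x * Real.sin a + y * Real.cos a : ℝ) : ℂ) * Complex.I)
      = Complex.exp ((a : ℂ) * Complex.I) * ((x : ℂ) + (y : ℂ) * Complex.I) := by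
    rw [Complex.exp_mul_I, ← Complex.ofReal_cos, ← Complex.ofReal_sin]
    push_cast
    ring_nf
    rw [Complex.I_sq]
    ring
  rw [h1, mul_pow, ← Complex.exp_nat_mul,
    show ((n : ℂ) * ((a : ℂ) * Complex.I)) = ((n * a : ℝ) : ℂ) * Complex.I by push_cast; ring,
    Complex.exp_mul_I, ← Complex.ofReal_cos, ← Complex.ofReal_sin]

/-- the rotation `R(Δθ, Δφ)` rotates the plane spanned by
`F_{k,ℓ,0}` and `F_{k,−ℓ,0}` through the angle `ℓΔθ`. -/
theorem stmt_9 (k : ℕ) (ℓ : ℤ) (hl : 0 < ℓ) (h1 : ℓ ≤ (k : ℤ))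
    (h2 : Int.ModEq 2 ℓ k) (Δθ Δφ : ℝ) :
    (F k ℓ 0 ∘ Rrot Δθ Δφ
        = fun v => Real.cos (ℓ * Δθ) * F k ℓ 0 v - Real.sin (ℓ * Δθ) * F k (-ℓ) 0 v)
    ∧ (F k (-ℓ) 0 ∘ Rrot Δθ Δφ
        = fun v => Real.sin (ℓ * Δθ) * F k ℓ 0 v + Real.cos (ℓ * Δθ) * F k (-ℓ) 0 v) := by
  have hle : (0:ℤ) ≤ ℓ := le_of_lt hl
  have hnle : ¬ (0:ℤ) ≤ -ℓ := by omega
  have hcast : (ℓ : ℝ) = (ℓ.natAbs : ℝ) := by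
    rw [Nat.cast_natAbs]
    exact_mod_cast (abs_of_nonneg hle).symm
  have key : ∀ p : Fin 4 → ℝ,
      circ ℓ (Rrot Δθ Δφ p 0) (Rrot Δθ Δφ p 1)
        = Real.cos ((ℓ.natAbs : ℝ) * Δθ) * circ ℓ (p 0) (p 1)
          - Real.sin ((ℓ.natAbs : ℝ) * Δθ) * circ (-ℓ) (p 0) (p 1)
      ∧ circ (-ℓ) (Rrot Δθ Δφ p 0) (Rrot Δθ Δφ p 1)
        = Real.sin ((ℓ.natAbs : ℝ) * Δθ) * circ ℓ (p 0) (p 1)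
          + Real.cos ((ℓ.natAbs : ℝ) * Δθ) * circ (-ℓ) (p 0) (p 1) := by
    intro p
    have hr0 : Rrot Δθ Δφ p 0 = p 0 * Real.cos Δθ - p 1 * Real.sin Δθ := rfl
    have hr1 : Rrot Δθ Δφ p 1 = p 0 * Real.sin Δθ + p 1 * Real.cos Δθ := rfl
    constructor
    · rw [circ, circ, circ, if_pos hle, if_pos hle, if_neg hnle, Int.natAbs_neg, hr0, hr1]
      rw [rot_pow]
      simp only [Complex.add_re, Complex.add_im, Complex.mul_re, Complex.mul_im,
        Complex.ofReal_re, Complex.ofReal_im, Complex.I_re, Complex.I_im]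
      ring
    · rw [circ, circ, circ, if_pos hle, if_neg hnle, if_neg hnle, Int.natAbs_neg, hr0, hr1]
      rw [rot_pow]
      simp only [Complex.add_re, Complex.add_im, Complex.mul_re, Complex.mul_im,
        Complex.ofReal_re, Complex.ofReal_im, Complex.I_re, Complex.I_im]
      ring
  have hsum : ∀ p : Fin 4 → ℝ, ∀ d : ℕ,
      (∑ i ∈ Finset.range (d + 1),
        (Nat.choose (0 + d) i : ℝ) * (Nat.choose (ℓ.natAbs + d) (d - i) : ℝ) *
        ((Rrot Δθ Δφ p 0) ^ 2 + (Rrot Δθ Δφ p 1) ^ 2) ^ i *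
        (-((Rrot Δθ Δφ p 2) ^ 2 + (Rrot Δθ Δφ p 3) ^ 2)) ^ (d - i))
      = ∑ i ∈ Finset.range (d + 1),
        (Nat.choose (0 + d) i : ℝ) * (Nat.choose (ℓ.natAbs + d) (d - i) : ℝ) *
        (p 0 ^ 2 + p 1 ^ 2) ^ i * (-(p 2 ^ 2 + p 3 ^ 2)) ^ (d - i) := by
    intro p d
    have hr0 : Rrot Δθ Δφ p 0 = p 0 * Real.cos Δθ - p 1 * Real.sin Δθ := rfl
    have hr1 : Rrot Δθ Δφ p 1 = p 0 * Real.sin Δθ + p 1 * Real.cos Δθ := rfl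
    have hr2 : Rrot Δθ Δφ p 2 = p 2 * Real.cos Δφ - p 3 * Real.sin Δφ := rfl
    have hr3 : Rrot Δθ Δφ p 3 = p 2 * Real.sin Δφ + p 3 * Real.cos Δφ := rfl
    have inv1 : (Rrot Δθ Δφ p 0) ^ 2 + (Rrot Δθ Δφ p 1) ^ 2 = p 0 ^ 2 + p 1 ^ 2 := by
      rw [hr0, hr1]
      linear_combination (p 0 ^ 2 + p 1 ^ 2) * Real.sin_sq_add_cos_sq Δθ
    have inv2 : (Rrot Δθ Δφ p 2) ^ 2 + (Rrot Δθ Δφ p 3) ^ 2 = p 2 ^ 2 + p 3 ^ 2 := by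
      rw [hr2, hr3]
      linear_combination (p 2 ^ 2 + p 3 ^ 2) * Real.sin_sq_add_cos_sq Δφ
    rw [inv1, inv2]
  have hcirc0 : ∀ u v : ℝ, circ 0 u v = 1 := by
    intro u v
    simp [circ]
  constructor <;> funext p <;>
    simp only [Function.comp_apply, F, Int.natAbs_neg, Int.natAbs_zero, dd, hcirc0, mul_one,
      hsum p, (key p).1, (key p).2, hcast] <;>
    ring


end
end

section
/- For all integers k ≥ 0 and ℓ > 0, m > 0 with ℓ + m ≤ k and ℓ + m ≡ k (mod 2), define e₁ = (F_{k,ℓ,m} + F_{k,−ℓ,−m})/√2, e₂ = (F_{k,−ℓ,m} − F_{k,ℓ,−m})/√2, e₃ = (F_{k,ℓ,m} − F_{k,−ℓ,−m})/√2, e₄ = (F_{k,−ℓ,m} + F_{k,ℓ,−m})/√2. Then for all real Δθ, Δφ: (e₁ ∘ R(Δθ,Δφ) = e₁ and e₂ ∘ R(Δθ,Δφ) = e₂) if and only if ℓΔθ − mΔφ is an integer multiple of 2π; and (e₃ ∘ R(Δθ,Δφ) = e₃ and e₄ ∘ R(Δθ,Δφ) = e₄) if and only if ℓΔθ + mΔφ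 is an integer multiple of 2π. -/
noncomputable section


namespace Stmt11Aux

/-- The scalar (rotation-invariant) factor in `F`. -/
def Sfac (k : ℕ) (ℓ m : ℤ) (p : Fin 4 → ℝ) : ℝ :=
  ∑ i ∈ Finset.range (dd k ℓ m + 1),
      (Nat.choose (m.natAbs + dd k ℓ m) i : ℝ) *
      (Nat.choose (ℓ.natAbs + dd k ℓ m) (dd k ℓ m - i) : ℝ) *
      (p 0 ^ 2 + p 1 ^ 2) ^ i * (-(p 2 ^ 2 + p 3 ^ 2)) ^ (dd k ℓ m - i)

lemma F_eq (k : ℕ) (ℓ m : ℤ) (p : Fin 4 → ℝ) :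
    F k ℓ m p = Sfac k ℓ m p * circ ℓ (p 0) (p 1) * circ m (p 2) (p 3) := rfl

lemma dd_abs (k : ℕ) (ℓ m ℓ' m' : ℤ) (h1 : ℓ.natAbs = ℓ'.natAbs) (h2 : m.natAbs = m'.natAbs) :
    dd k ℓ m = dd k ℓ' m' := by simp [dd, h1, h2]

lemma Sfac_abs (k : ℕ) (ℓ m ℓ' m' : ℤ) (h1 : ℓ.natAbs = ℓ'.natAbs) (h2 : m.natAbs = m'.natAbs) :
    Sfac k ℓ m = Sfac k ℓ' m' := by funext p; simp only [Sfac, dd, h1, h2]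

def z1 (p : Fin 4 → ℝ) : ℂ := (p 0 : ℂ) + (p 1 : ℝ) * Complex.I
def z2 (p : Fin 4 → ℝ) : ℂ := (p 2 : ℂ) + (p 3 : ℝ) * Complex.I

lemma pow_rot (n : ℕ) (a x y : ℝ) :
    ((↑(x*Real.cos a - y*Real.sin a) : ℂ) + ↑(x*Real.sin a + y*Real.cos a)*Complex.I)^n
      = Complex.exp (n*a*Complex.I) * ((x:ℂ)+y*Complex.I)^n := by
  have h : ((↑(x*Real.cos a - y*Real.sin a) : ℂ) + ↑(x*Real.sin a + y*Real.cos a)*Complex.I)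
      = ((x:ℂ)+y*Complex.I) * Complex.exp (a*Complex.I) := by
    rw [Complex.exp_mul_I]
    simp [Complex.ext_iff, Complex.cos_ofReal_re, Complex.sin_ofReal_re]
  rw [h, mul_pow, ← Complex.exp_nat_mul]
  ring_nf

lemma z1_rot_pow (n : ℕ) (a b : ℝ) (p : Fin 4 → ℝ) :
    z1 (Rrot a b p) ^ n = Complex.exp (n*a*Complex.I) * z1 p ^ n := by
  have h0 : Rrot a b p 0 = p 0 * Real.cos a - p 1 * Real.sin a := rfl
  have h1 : Rrot a b p 1 = p 0 * Real.sin a + p 1 * Real.cos a := rfl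
  simp only [z1, h0, h1]
  exact pow_rot n a (p 0) (p 1)

lemma z2_rot_pow (n : ℕ) (a b : ℝ) (p : Fin 4 → ℝ) :
    z2 (Rrot a b p) ^ n = Complex.exp (n*b*Complex.I) * z2 p ^ n := by
  have h2 : Rrot a b p 2 = p 2 * Real.cos b - p 3 * Real.sin b := rfl
  have h3 : Rrot a b p 3 = p 2 * Real.sin b + p 3 * Real.cos b := rfl
  simp only [z2, h2, h3]
  exact pow_rot n b (p 2) (p 3)

lemma rot_sq (a x y : ℝ) :
    (x*Real.cos a - y*Real.sin a)^2 + (x*Real.sin a + y*Real.cos a)^2 = x^2+y^2 := by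
  linear_combination (x^2+y^2) * Real.sin_sq_add_cos_sq a

lemma Sfac_rot (k : ℕ) (ℓ m : ℤ) (a b : ℝ) (p : Fin 4 → ℝ) :
    Sfac k ℓ m (Rrot a b p) = Sfac k ℓ m p := by
  have h0 : Rrot a b p 0 = p 0 * Real.cos a - p 1 * Real.sin a := rfl
  have h1 : Rrot a b p 1 = p 0 * Real.sin a + p 1 * Real.cos a := rfl
  have h2 : Rrot a b p 2 = p 2 * Real.cos b - p 3 * Real.sin b := rfl
  have h3 : Rrot a b p 3 = p 2 * Real.sin b + p 3 * Real.cos b := rfl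
  simp only [Sfac, h0, h1, h2, h3, rot_sq]

lemma pair_iff {α : ℝ} {G : (Fin 4 → ℝ) → ℂ} {Rr : (Fin 4 → ℝ) → (Fin 4 → ℝ)}
    (hG : ∀ p, G (Rr p) = Complex.exp ((α:ℂ)*Complex.I) * G p)
    (hne : ∃ p, G p ≠ 0)
    {e f : (Fin 4 → ℝ) → ℝ}
    (he : ∀ p, e p = (G p).re / Real.sqrt 2)
    (hf : ∀ p, f p = (G p).im / Real.sqrt 2) :
    (e ∘ Rr = e ∧ f ∘ Rr = f) ↔ ∃ j : ℤ, α = j * (2*Real.pi) := by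
  have hs2 : Real.sqrt 2 ≠ 0 := by positivity
  constructor
  · rintro ⟨h1, h2⟩
    obtain ⟨p, hp⟩ := hne
    have hre : (G (Rr p)).re = (G p).re := by
      have := congrFun h1 p
      simp only [Function.comp_apply, he] at this
      exact (div_left_inj' hs2).mp this
    have him : (G (Rr p)).im = (G p).im := by
      have := congrFun h2 p
      simp only [Function.comp_apply, hf] at this
      exact (div_left_inj' hs2).mp this
    have hGp : G (Rr p) = G p := Complex.ext hre him
    have hexp : Complex.exp ((α:ℂ)*Complex.I) = 1 := by
      have h := (hG p).symm.trans hGp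
      have := mul_right_cancel₀ hp (h.trans (one_mul (G p)).symm)
      exact this
    obtain ⟨n, hn⟩ := Complex.exp_eq_one_iff.mp hexp
    refine ⟨n, ?_⟩
    have := congrArg Complex.im hn
    simpa using this
  · rintro ⟨j, hj⟩
    have hexp : Complex.exp ((α:ℂ)*Complex.I) = 1 := by
      rw [hj]
      push_cast
      rw [show ((j:ℂ) * (2*(Real.pi:ℂ))) * Complex.I = (j:ℂ) * (2*(Real.pi:ℂ)*Complex.I) by ring]
      exact Complex.exp_int_mul_two_pi_mul_I j
    constructor <;> funext p <;> simp [Function.comp, he, hf, hG, hexp]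

end Stmt11Aux

/-- the rotation `R(Δθ, Δφ)` fixes the plane spanned by `e₁, e₂`
(resp. `e₃, e₄`) pointwise iff `ℓΔθ − mΔφ` (resp. `ℓΔθ + mΔφ`) is an integer
multiple of `2π`. -/
theorem stmt_11 (k : ℕ) (ℓ m : ℤ) (hl : 0 < ℓ) (hm : 0 < m)
    (h1 : ℓ + m ≤ (k : ℤ)) (h2 : Int.ModEq 2 (ℓ + m) k) (Δθ Δφ : ℝ) :
    let e1 : (Fin 4 → ℝ) → ℝ := fun v => (F k ℓ m v + F k (-ℓ) (-m) v) / Real.sqrt 2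
    let e2 : (Fin 4 → ℝ) → ℝ := fun v => (F k (-ℓ) m v - F k ℓ (-m) v) / Real.sqrt 2
    let e3 : (Fin 4 → ℝ) → ℝ := fun v => (F k ℓ m v - F k (-ℓ) (-m) v) / Real.sqrt 2
    let e4 : (Fin 4 → ℝ) → ℝ := fun v => (F k (-ℓ) m v + F k ℓ (-m) v) / Real.sqrt 2
    ((e1 ∘ Rrot Δθ Δφ = e1 ∧ e2 ∘ Rrot Δθ Δφ = e2)
        ↔ ∃ j : ℤ, (ℓ : ℝ) * Δθ - (m : ℝ) * Δφ = j * (2 * Real.pi))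
    ∧ ((e3 ∘ Rrot Δθ Δφ = e3 ∧ e4 ∘ Rrot Δθ Δφ = e4)
        ↔ ∃ j : ℤ, (ℓ : ℝ) * Δθ + (m : ℝ) * Δφ = j * (2 * Real.pi)) := by
  intro e1 e2 e3 e4
  open Stmt11Aux in
  have hL : ((ℓ.natAbs : ℕ) : ℝ) = (ℓ : ℝ) := by rw [Nat.cast_natAbs]; exact_mod_cast abs_of_nonneg hl.le
  have hM : ((m.natAbs : ℕ) : ℝ) = (m : ℝ) := by rw [Nat.cast_natAbs]; exact_mod_cast abs_of_nonneg hm.le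
  have hLc : ((ℓ.natAbs : ℕ) : ℂ) = (ℓ : ℂ) := by rw [← Complex.ofReal_natCast, hL, Complex.ofReal_intCast]
  have hMc : ((m.natAbs : ℕ) : ℂ) = (m : ℂ) := by rw [← Complex.ofReal_natCast, hM, Complex.ofReal_intCast]
  have hnl : ¬ (0:ℤ) ≤ -ℓ := by omega
  have hnm : ¬ (0:ℤ) ≤ -m := by omega
  set L := ℓ.natAbs with hLdef
  set M := m.natAbs with hMdef
  -- circ values
  have hc1 : ∀ p : Fin 4 → ℝ, circ ℓ (p 0) (p 1) = (z1 p ^ L).re := by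
    intro p; simp [circ, hl.le, z1, hLdef]
  have hc1' : ∀ p : Fin 4 → ℝ, circ (-ℓ) (p 0) (p 1) = (z1 p ^ L).im := by
    intro p; simp [circ, hnl, z1, hLdef, not_le.mpr hl]
  have hc2 : ∀ p : Fin 4 → ℝ, circ m (p 2) (p 3) = (z2 p ^ M).re := by
    intro p; simp [circ, hm.le, z2, hMdef]
  have hc2' : ∀ p : Fin 4 → ℝ, circ (-m) (p 2) (p 3) = (z2 p ^ M).im := by
    intro p; simp [circ, hnm, z2, hMdef, not_le.mpr hm]
  have hSnn : Sfac k (-ℓ) (-m) = Sfac k ℓ m := Sfac_abs k (-ℓ) (-m) ℓ m (by simp) (by simp)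
  have hSnl : Sfac k (-ℓ) m = Sfac k ℓ m := Sfac_abs k (-ℓ) m ℓ m (by simp) rfl
  have hSnm : Sfac k ℓ (-m) = Sfac k ℓ m := Sfac_abs k ℓ (-m) ℓ m rfl (by simp)
  set G1 : (Fin 4 → ℝ) → ℂ := fun p =>
    (Sfac k ℓ m p : ℂ) * (z1 p ^ L * (starRingEnd ℂ) (z2 p ^ M)) with hG1def
  set G2 : (Fin 4 → ℝ) → ℂ := fun p =>
    (Sfac k ℓ m p : ℂ) * (z1 p ^ L * z2 p ^ M) with hG2def
  have he1 : ∀ p, e1 p = (G1 p).re / Real.sqrt 2 := by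
    intro p
    show (F k ℓ m p + F k (-ℓ) (-m) p) / Real.sqrt 2 = _
    congr 1
    rw [F_eq, F_eq, hSnn, hc1 p, hc1' p, hc2 p, hc2' p, hG1def]
    simp only [Complex.mul_re, Complex.mul_im, Complex.conj_re, Complex.conj_im,
      Complex.ofReal_re, Complex.ofReal_im]
    ring
  have he2 : ∀ p, e2 p = (G1 p).im / Real.sqrt 2 := by
    intro p
    show (F k (-ℓ) m p - F k ℓ (-m) p) / Real.sqrt 2 = _
    congr 1
    rw [F_eq, F_eq, hSnl, hSnm, hc1 p, hc1' p, hc2 p, hc2' p, hG1def]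
    simp only [Complex.mul_re, Complex.mul_im, Complex.conj_re, Complex.conj_im,
      Complex.ofReal_re, Complex.ofReal_im]
    ring
  have he3 : ∀ p, e3 p = (G2 p).re / Real.sqrt 2 := by
    intro p
    show (F k ℓ m p - F k (-ℓ) (-m) p) / Real.sqrt 2 = _
    congr 1
    rw [F_eq, F_eq, hSnn, hc1 p, hc1' p, hc2 p, hc2' p, hG2def]
    simp only [Complex.mul_re, Complex.mul_im, Complex.conj_re, Complex.conj_im,
      Complex.ofReal_re, Complex.ofReal_im]
    ring
  have he4 : ∀ p, e4 p = (G2 p).im / Real.sqrt 2 := by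
    intro p
    show (F k (-ℓ) m p + F k ℓ (-m) p) / Real.sqrt 2 = _
    congr 1
    rw [F_eq, F_eq, hSnl, hSnm, hc1 p, hc1' p, hc2 p, hc2' p, hG2def]
    simp only [Complex.mul_re, Complex.mul_im, Complex.conj_re, Complex.conj_im,
      Complex.ofReal_re, Complex.ofReal_im]
    ring
  -- rotation action
  have hG1rot : ∀ p, G1 (Rrot Δθ Δφ p)
      = Complex.exp ((((ℓ:ℝ) * Δθ - (m:ℝ) * Δφ : ℝ) : ℂ) * Complex.I) * G1 p := by
    intro p
    have key : Complex.exp ((L:ℂ)*Δθ*Complex.I) * Complex.exp (-((M:ℂ)*Δφ*Complex.I))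
        = Complex.exp ((((ℓ:ℝ) * Δθ - (m:ℝ) * Δφ : ℝ) : ℂ) * Complex.I) := by
      rw [← Complex.exp_add]
      congr 1
      push_cast [hLc, hMc]
      ring
    have hconj : (starRingEnd ℂ) (z2 (Rrot Δθ Δφ p) ^ M)
        = Complex.exp (-((M:ℂ)*Δφ*Complex.I)) * (starRingEnd ℂ) (z2 p ^ M) := by
      rw [z2_rot_pow, map_mul, ← Complex.exp_conj]
      congr 2
      simp [Complex.conj_I]
    rw [hG1def]
    simp only
    rw [Sfac_rot, z1_rot_pow, hconj, ← key]
    ring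
  have hG2rot : ∀ p, G2 (Rrot Δθ Δφ p)
      = Complex.exp ((((ℓ:ℝ) * Δθ + (m:ℝ) * Δφ : ℝ) : ℂ) * Complex.I) * G2 p := by
    intro p
    have key : Complex.exp ((L:ℂ)*Δθ*Complex.I) * Complex.exp ((M:ℂ)*Δφ*Complex.I)
        = Complex.exp ((((ℓ:ℝ) * Δθ + (m:ℝ) * Δφ : ℝ) : ℂ) * Complex.I) := by
      rw [← Complex.exp_add]
      congr 1
      push_cast [hLc, hMc]
      ring
    rw [hG2def]
    simp only
    rw [Sfac_rot, z1_rot_pow, z2_rot_pow, ← key]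
    ring
  -- nonvanishing
  have hne : ∃ t : ℝ, 0 < t ∧ 0 < Sfac k ℓ m ![1,0,t,0] := by
    have h0 : Sfac k ℓ m ![1,0,(0:ℝ),0] = (Nat.choose (M + dd k ℓ m) (dd k ℓ m) : ℝ) := by
      rw [Sfac, Finset.sum_eq_single (dd k ℓ m)]
      · norm_num [hMdef]
      · intro i hi hne
        have hlt : i < dd k ℓ m := by
          have := Finset.mem_range.mp hi; omega
        have hz : (-(((![1,0,(0:ℝ),0] : Fin 4 → ℝ) 2) ^ 2 + ((![1,0,(0:ℝ),0] : Fin 4 → ℝ) 3) ^ 2)) = 0 := by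
          show -((0:ℝ) ^ 2 + (0:ℝ) ^ 2) = 0; norm_num
        rw [hz, zero_pow (by omega)]
        ring
      · intro h; exact absurd (Finset.self_mem_range_succ _) h
    have hpos0 : 0 < Sfac k ℓ m ![1,0,(0:ℝ),0] := by
      rw [h0]
      exact_mod_cast Nat.choose_pos (Nat.le_add_left _ _)
    have hcont : Continuous fun t : ℝ => Sfac k ℓ m ![1,0,t,0] := by
      have hrw : ∀ t : ℝ, Sfac k ℓ m ![1,0,t,0]
          = ∑ i ∈ Finset.range (dd k ℓ m + 1),
            (Nat.choose (M + dd k ℓ m) i : ℝ) *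
            (Nat.choose (L + dd k ℓ m) (dd k ℓ m - i) : ℝ) *
            ((1:ℝ) ^ 2 + 0 ^ 2) ^ i * (-(t ^ 2 + 0 ^ 2)) ^ (dd k ℓ m - i) := by
        intro t; rfl
      simp only [hrw]
      apply continuous_finset_sum
      intro i _
      fun_prop
    obtain ⟨δ, hδ, hδ'⟩ := Metric.continuousAt_iff.mp hcont.continuousAt
      (Sfac k ℓ m ![1,0,(0:ℝ),0]) hpos0
    refine ⟨δ/2, by linarith, ?_⟩
    have hd : dist (δ/2) (0:ℝ) < δ := by
      rw [Real.dist_eq, sub_zero, abs_of_pos (by linarith : (0:ℝ) < δ/2)]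
      linarith
    have := hδ' hd
    rw [Real.dist_eq] at this
    have := abs_sub_lt_iff.mp this
    linarith [this.1, this.2]
  have hz1t : ∀ t : ℝ, z1 (![1,0,t,0] : Fin 4 → ℝ) = 1 := by
    intro t; simp [z1]
  have hz2t : ∀ t : ℝ, z2 (![1,0,t,0] : Fin 4 → ℝ) = (t : ℂ) := by
    intro t; simp [z2, show ((![1,0,t,0] : Fin 4 → ℝ) 2) = t from rfl,
      show ((![1,0,t,0] : Fin 4 → ℝ) 3) = 0 from rfl]
  obtain ⟨t, ht, hSt⟩ := hne
  have hne1 : ∃ p, G1 p ≠ 0 := by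
    refine ⟨![1,0,t,0], ?_⟩
    rw [hG1def]
    simp only [hz1t, hz2t, one_pow, one_mul, ← Complex.ofReal_pow, Complex.conj_ofReal,
      ← Complex.ofReal_mul]
    rw [Complex.ofReal_ne_zero]
    positivity
  have hne2 : ∃ p, G2 p ≠ 0 := by
    refine ⟨![1,0,t,0], ?_⟩
    rw [hG2def]
    simp only [hz1t, hz2t, one_pow, one_mul, ← Complex.ofReal_pow, ← Complex.ofReal_mul]
    rw [Complex.ofReal_ne_zero]
    positivity
  exact ⟨pair_iff hG1rot hne1 he1 he2, pair_iff hG2rot hne2 he3 he4⟩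


end
end

section
/- For all integers k ≥ 0 and ℓ, m with |ℓ| + |m| ≤ k and ℓ + m ≡ k (mod 2), and all v ∈ ℝ⁴: F_{kℓm}(A(v)) = σ_{kℓm} · F_{k,m,ℓ}(v). -/
noncomputable section


lemma dd_symm' (k : ℕ) (ℓ m : ℤ) : dd k ℓ m = dd k m ℓ := by unfold dd; omega

lemma sum_swap' (d a b : ℕ) (x y : ℝ) :
    ∑ i ∈ Finset.range (d + 1),
      (Nat.choose (a + d) i : ℝ) * (Nat.choose (b + d) (d - i) : ℝ) * y ^ i * (-x) ^ (d - i)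
  = (-1 : ℝ) ^ d * ∑ i ∈ Finset.range (d + 1),
      (Nat.choose (b + d) i : ℝ) * (Nat.choose (a + d) (d - i) : ℝ) * x ^ i * (-y) ^ (d - i) := by
  rw [Finset.mul_sum, ← Finset.sum_range_reflect]
  apply Finset.sum_congr rfl
  intro i hi
  have hi' : i ≤ d := by simpa [Nat.lt_succ_iff] using hi
  simp only [Nat.add_sub_cancel, Nat.sub_sub_self hi']
  have h : (-1 : ℝ) ^ d * (-1 : ℝ) ^ i = (-1 : ℝ) ^ (d - i) := by
    rw [← pow_add]
    have e : d + i = (d - i) + 2 * i := by omega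
    rw [e, pow_add, pow_mul]; norm_num
  rw [neg_pow x, neg_pow y, ← h]
  ring_nf
  rw [mul_comm d 2, pow_mul]
  norm_num

lemma circ_neg_snd (j : ℤ) (u v : ℝ) :
    circ j u (-v) = (if 0 ≤ j then (1 : ℝ) else -1) * circ j u v := by
  unfold circ
  have key : ((u : ℂ) + (-v : ℝ) * Complex.I) = (starRingEnd ℂ) ((u : ℂ) + v * Complex.I) := by
    simp [Complex.ext_iff]
  rw [key, ← map_pow]
  split
  · rw [Complex.conj_re, one_mul]
  · rw [Complex.conj_im, neg_one_mul]

lemma circ_neg_fst (j : ℤ) (u v : ℝ) :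
    circ j (-u) v = (-1 : ℝ) ^ j.natAbs * (if 0 ≤ j then (1 : ℝ) else -1) * circ j u v := by
  unfold circ
  have key : (((-u : ℝ) : ℂ) + v * Complex.I)
      = (-1) * (starRingEnd ℂ) ((u : ℂ) + v * Complex.I) := by
    simp [Complex.ext_iff]
  rcases Nat.even_or_odd j.natAbs with h | h
  · have hC : ((-1 : ℂ)) ^ j.natAbs = 1 := h.neg_one_pow
    have hR : ((-1 : ℝ)) ^ j.natAbs = 1 := h.neg_one_pow
    rw [key, mul_pow, ← map_pow, hC, hR]
    split
    · rw [one_mul, Complex.conj_re]; ring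
    · rw [one_mul, Complex.conj_im]; ring
  · have hC : ((-1 : ℂ)) ^ j.natAbs = -1 := h.neg_one_pow
    have hR : ((-1 : ℝ)) ^ j.natAbs = -1 := h.neg_one_pow
    rw [key, mul_pow, ← map_pow, hC, hR]
    split
    · rw [neg_one_mul, Complex.neg_re, Complex.conj_re]; ring
    · rw [neg_one_mul, Complex.neg_im, Complex.conj_im]; ring

lemma neg_one_pow_ite (d : ℕ) : (-1 : ℝ) ^ d = (if Even d then (1 : ℝ) else -1) := by
  split_ifs with h
  · exact h.neg_one_pow
  · exact (Nat.not_even_iff_odd.mp h).neg_one_pow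

lemma neg_one_pow_ite_int (m : ℤ) :
    (-1 : ℝ) ^ m.natAbs = (if Even m then (1 : ℝ) else -1) := by
  rw [neg_one_pow_ite]
  congr 1
  simp [Int.natAbs_even]

/-- the action of the isometry `A` on `F_{kℓm}`:
`F_{kℓm}(A(v)) = σ_{kℓm} · F_{k,m,ℓ}(v)`. -/
theorem stmt_13 (k : ℕ) (ℓ m : ℤ) (h1 : ℓ.natAbs + m.natAbs ≤ k)
    (h2 : Int.ModEq 2 (ℓ + m) k) (v : Fin 4 → ℝ) :
    F k ℓ m (Amap v) = sgn k ℓ m * F k m ℓ v := by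
  have a0 : Amap v 0 = v 2 := rfl
  have a1 : Amap v 1 = -(v 3) := rfl
  have a2 : Amap v 2 = -(v 0) := rfl
  have a3 : Amap v 3 = v 1 := rfl
  unfold F sgn
  rw [a0, a1, a2, a3, circ_neg_snd, circ_neg_fst, dd_symm' k ℓ m]
  have hs : ∀ i : ℕ, (v 2 ^ 2 + (-(v 3)) ^ 2) ^ i = (v 2 ^ 2 + v 3 ^ 2) ^ i := by
    intro i; ring
  have hs2 : ∀ i : ℕ, (-((-(v 0)) ^ 2 + v 1 ^ 2)) ^ i = (-(v 0 ^ 2 + v 1 ^ 2)) ^ i := by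
    intro i; ring
  simp only [hs, hs2]
  rw [sum_swap' (dd k m ℓ) m.natAbs ℓ.natAbs (v 0 ^ 2 + v 1 ^ 2) (v 2 ^ 2 + v 3 ^ 2),
    neg_one_pow_ite, neg_one_pow_ite_int, dd_symm' k m ℓ]
  ring

end
end

section
/- For integers k ≥ 0 and ℓ > 0, m > 0 with ℓ ≠ m, ℓ + m ≤ k, ℓ + m ≡ k (mod 2), and ℓ, m of opposite parity (one even, one odd): if f : ℝ⁴ → ℝ is a real linear combination of the eight functions F_{k,ℓ,m}, F_{k,ℓ,−m}, F_{k,−ℓ,m}, F_{k,−ℓ,−m}, F_{k,m,ℓ}, F_{k,m,−ℓ}, F_{k,−m,ℓ}, F_{k,−m,−ℓ} and satisfies f ∘ A = f, then f = 0. -/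
noncomputable section


lemma circ_neg (j : ℤ) (u v : ℝ) :
    circ j (-u) (-v) = (-1 : ℝ) ^ j.natAbs * circ j u v := by
  unfold circ
  have h : ((-u : ℝ) : ℂ) + ((-v : ℝ) : ℂ) * Complex.I = -(((u : ℝ) : ℂ) + v * Complex.I) := by
    push_cast; ring
  rcases Nat.even_or_odd j.natAbs with he | ho
  · rw [h, he.neg_pow, he.neg_one_pow, one_mul]
  · rw [h, ho.neg_pow, ho.neg_one_pow]
    split_ifs <;> simp

lemma F_neg (k : ℕ) (a b : ℤ) (p : Fin 4 → ℝ) :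
    F k a b (fun i => -(p i)) = (-1 : ℝ) ^ (a.natAbs + b.natAbs) * F k a b p := by
  unfold F
  simp only [neg_sq, circ_neg, pow_add]
  ring

/-- when `ℓ` and `m` have opposite parity, the only `A`-invariant
linear combination of the eight functions `F_{k,±ℓ,±m}, F_{k,±m,±ℓ}` is zero. -/
theorem stmt_17 (k : ℕ) (ℓ m : ℤ) (hl : 0 < ℓ) (hm : 0 < m) (hne : ℓ ≠ m)
    (hsum : ℓ + m ≤ (k : ℤ)) (hpar : Int.ModEq 2 (ℓ + m) k)
    (hopp : (Even ℓ ∧ Odd m) ∨ (Odd ℓ ∧ Even m))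
    (f : (Fin 4 → ℝ) → ℝ)
    (hf : f ∈ Submodule.span ℝ
      ({F k ℓ m, F k ℓ (-m), F k (-ℓ) m, F k (-ℓ) (-m),
        F k m ℓ, F k m (-ℓ), F k (-m) ℓ, F k (-m) (-ℓ)} : Set ((Fin 4 → ℝ) → ℝ)))
    (hA : f ∘ Amap = f) :
    f = 0 := by
  have hodd : Odd (ℓ.natAbs + m.natAbs) := by
    rcases hopp with ⟨he, ho⟩ | ⟨ho, he⟩
    · exact (Int.natAbs_even.mpr he).add_odd (Int.natAbs_odd.mpr ho)
    · exact (Int.natAbs_odd.mpr ho).add_even (Int.natAbs_even.mpr he)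
  have hFneg : ∀ (a b : ℤ), a.natAbs + b.natAbs = ℓ.natAbs + m.natAbs →
      ∀ p : Fin 4 → ℝ, F k a b (fun i => -(p i)) = -F k a b p := by
    intro a b hab p
    rw [F_neg, hab, hodd.neg_one_pow, neg_one_mul]
  have key : ∀ g ∈ Submodule.span ℝ
      ({F k ℓ m, F k ℓ (-m), F k (-ℓ) m, F k (-ℓ) (-m),
        F k m ℓ, F k m (-ℓ), F k (-m) ℓ, F k (-m) (-ℓ)} : Set ((Fin 4 → ℝ) → ℝ)),
      ∀ p : Fin 4 → ℝ, g (fun i => -(p i)) = -g p := by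
    intro g hg
    induction hg using Submodule.span_induction with
    | mem g hg =>
      simp only [Set.mem_insert_iff, Set.mem_singleton_iff] at hg
      rcases hg with h | h | h | h | h | h | h | h <;> subst h <;>
        apply hFneg <;> omega
    | zero => simp
    | add g h _ _ hg hh => intro p; simp [hg p, hh p]; ring
    | smul c g _ hg => intro p; simp [hg p]
  have hAA : ∀ p : Fin 4 → ℝ, Amap (Amap p) = fun i => -(p i) := by
    intro p; funext i; fin_cases i <;> simp [Amap]
  funext p
  have h1 : f (Amap (Amap p)) = f p :=
    ((congrFun hA (Amap p)).symm.trans rfl).symm.trans (congrFun hA p)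
  rw [hAA, key f hf] at h1
  have : f p = 0 := by linarith
  simpa using this

end
end
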